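/- arXiv:2601.23083 — 9 statements merged into one kernel-verified Lean document; each statement's English description precedes it below -/
import Mathlib

section
/- There exists a universal constant c > 0 such that the following holds for all integers d, t ≥ 1 and Δ, Ξ ≥ 1. Let D ∈ ℤ^{d×t} have all entries of absolute value at most Δ, let b ∈ ℤ^d satisfy ‖b‖_∞ ≤ Ξ, and let x ∈ ℤ_{≥0}^t satisfy Dx = b. Then there exist a vector x̄ ∈ ℤ_{≥0}^t with Dx̄ = b and ‖x̄‖_∞ ≤ (c·d·(Δ+Ξ))^d, and a finite multiset μ of elements of 𝒢(D) ∩ ℤ_{≥0}^t, such that x = x̄ + Σ_{g ∈ 𝒢(D) ∩ ℤ_{≥0}^t} μ_g · g. -/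
/-!
List the columns of `D` with multiplicities `x` (`N = ∑ xᵢ` of them) and centre them by `b / N`,
so that they sum to zero. By the Steinitz lemma in the Grinberg–Sevastyanov form (vectors of norm
`≤ R` summing to zero in a `d`-dimensional normed space can be ordered so that all partial sums
have norm `≤ d R`; one walks down a chain of sets `A`, keeping a vertex of the polytope
`{μ ∈ [0,1]^A | ∑ μᵢ = #A - d, ∑ μᵢ vᵢ = 0}`), the columns can be ordered so that all their
integer partial sums lie in a box with `(2 (d (Δ + Ξ) + Ξ) + 1) ^ d` points. If `N` is at least
that large, two partial sums coincide and the columns in between give a nonzero kernel vector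
`0 ≤ y ≤ x`. Hence a minimal solution `x̄ ≤ x` is small, and the nonnegative kernel vector `x - x̄`
is a sum of minimal nonnegative kernel vectors, which are Graver elements.
-/

/-- The Graver basis of `D ∈ ℤ^{d×t}`: the set of nonzero integer vectors in the
kernel of `D` that are minimal under the conformal order `⊑`
(`x ⊑ y` iff `xᵢyᵢ ≥ 0` and `|xᵢ| ≤ |yᵢ|` for all `i`). -/
def Graver {d t : ℕ} (D : Matrix (Fin d) (Fin t) ℤ) : Set (Fin t → ℤ) :=
  {g | g ≠ 0 ∧ D.mulVec g = 0 ∧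
    ∀ h : Fin t → ℤ, h ≠ 0 → D.mulVec h = 0 →
      (∀ i, 0 ≤ h i * g i ∧ |h i| ≤ |g i|) → h = g}

open Finset Module Matrix

section SteinitzPolytope

variable {K E ι : Type*} [Field K] [AddCommGroup E] [Module K E]

lemma exists_relation_sum_zero_of_finrank_succ_lt_card [FiniteDimensional K E] (v : ι → E)
    {F : Finset ι} (hF : finrank K E + 1 < #F) :
    ∃ w : ι → K, (∀ i ∉ F, w i = 0) ∧ (∃ i ∈ F, w i ≠ 0) ∧
      ∑ i ∈ F, w i = 0 ∧ ∑ i ∈ F, w i • v i = 0 := by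
  classical
  have hdep : ¬ LinearIndepOn K (fun i => (v i, (1 : K))) (F : Set ι) := fun h => by
    have := LinearIndependent.fintype_card_le_finrank h
    simp only [coe_sort_coe, Fintype.card_coe, finrank_prod, finrank_self] at this
    omega
  obtain ⟨f, hf, i, hi, hfi⟩ := not_linearIndepOn_finset_iff.1 hdep
  refine ⟨F.piecewise f 0, fun j hj => F.piecewise_eq_of_notMem _ _ hj,
    ⟨i, hi, by rwa [F.piecewise_eq_of_mem _ _ hi]⟩, ?_⟩
  rw [sum_congr rfl fun j hj => F.piecewise_eq_of_mem f 0 hj,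
    sum_congr rfl fun j hj => congrArg (· • v j) (F.piecewise_eq_of_mem f 0 hj)]
  simpa [Prod.ext_iff, Prod.fst_sum, Prod.snd_sum, and_comm] using hf

variable [LinearOrder K] [IsStrictOrderedRing K]

structure IsSteinitzWeight (v : ι → E) (A : Finset ι) (s : K) (μ : ι → K) : Prop where
  mem_Icc : ∀ i ∈ A, 0 ≤ μ i ∧ μ i ≤ 1
  sum_eq : ∑ i ∈ A, μ i = s
  sum_smul_eq_zero : ∑ i ∈ A, μ i • v i = 0

lemma exists_add_mul_mem_Icc_and_eq_zero_or_one {G : Finset ι} (hG : G.Nonempty) {μ w : ι → K}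
    (hμ : ∀ i ∈ G, 0 < μ i ∧ μ i < 1) (hw : ∀ i ∈ G, w i ≠ 0) :
    ∃ c : K, (∀ i ∈ G, 0 ≤ μ i + c * w i ∧ μ i + c * w i ≤ 1) ∧
      ∃ i ∈ G, μ i + c * w i = 0 ∨ μ i + c * w i = 1 := by
  -- `r i` is the step after which the `i`-th coordinate reaches the boundary of `[0, 1]`
  set r : ι → K := fun i => if 0 < w i then (1 - μ i) / w i else -μ i / w i
  obtain ⟨i₀, hi₀, hc⟩ := G.exists_mem_eq_inf' hG r
  have hr : ∀ i ∈ G, 0 < r i := fun i hi => by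
    obtain ⟨h0, h1⟩ := hμ i hi
    rcases (hw i hi).lt_or_gt with hneg | hpos
    · simp only [r, if_neg hneg.not_gt]
      exact div_pos_of_neg_of_neg (by linarith) hneg
    · simp only [r, if_pos hpos]
      exact div_pos (by linarith) hpos
  refine ⟨r i₀, fun i hi => ?_, i₀, hi₀, ?_⟩
  · have hle : r i₀ ≤ r i := hc ▸ G.inf'_le r hi
    have h0 : 0 ≤ r i₀ := (hr i₀ hi₀).le
    obtain ⟨hμ0, hμ1⟩ := hμ i hi
    rcases (hw i hi).lt_or_gt with hneg | hpos
    · simp only [r, if_neg hneg.not_gt] at hle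
      rw [le_div_iff_of_neg hneg] at hle
      constructor <;> nlinarith
    · simp only [r, if_pos hpos] at hle
      rw [le_div_iff₀ hpos] at hle
      constructor <;> nlinarith
  · have hw₀ := hw i₀ hi₀
    by_cases hpos : 0 < w i₀
    · right; simp only [r, if_pos hpos]; field_simp; ring
    · left; simp only [r, if_neg hpos]; field_simp; ring

lemma exists_eq_zero_of_card_fractional_le {A : Finset ι} {μ : ι → K} {m : ℕ}
    (hμ : ∀ i ∈ A, 0 ≤ μ i ∧ μ i ≤ 1) (hfrac : #{i ∈ A | 0 < μ i ∧ μ i < 1} ≤ m + 1)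
    (hsum : ∑ i ∈ A, μ i ≤ #A - (m + 1)) : ∃ i ∈ A, μ i = 0 := by
  by_contra! hne
  set F := {i ∈ A | 0 < μ i ∧ μ i < 1}
  -- the coordinates outside `F` equal `1`, so `∑ (1 - μ i)` only sees the fractional ones
  have hF : ∑ i ∈ F, (1 - μ i) = #A - ∑ i ∈ A, μ i := by
    rw [sum_filter_of_ne fun i hi h1 => ?_, sum_sub_distrib, sum_const, nsmul_one]
    exact ⟨(hμ i hi).1.lt_of_ne' (hne i hi), (hμ i hi).2.lt_of_ne fun h => h1 (by rw [h, sub_self])⟩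
  have hlt : ∑ i ∈ F, (1 - μ i) < m + 1 := by
    rcases F.eq_empty_or_nonempty with hF0 | hFne
    · rw [hF0, sum_empty]; positivity
    · calc ∑ i ∈ F, (1 - μ i) < ∑ i ∈ F, (1 : K) :=
            sum_lt_sum_of_nonempty hFne fun i hi => by linarith [(mem_filter.1 hi).2.1]
        _ ≤ m + 1 := by rw [sum_const, nsmul_one]; exact_mod_cast hfrac
  linarith

namespace IsSteinitzWeight

variable {v : ι → E} {A : Finset ι} {s : K} {μ : ι → K}

lemma smul (hμ : IsSteinitzWeight v A s μ) {a : K} (ha₀ : 0 ≤ a) (ha₁ : a ≤ 1) :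
    IsSteinitzWeight v A (a * s) (a • μ) where
  mem_Icc i hi := by
    obtain ⟨h0, h1⟩ := hμ.mem_Icc i hi
    simp only [Pi.smul_apply, smul_eq_mul]
    constructor <;> nlinarith
  sum_eq := by simp [← mul_sum, hμ.sum_eq]
  sum_smul_eq_zero := by simp [mul_smul, ← smul_sum, hμ.sum_smul_eq_zero]

omit [IsStrictOrderedRing K] in
lemma erase [DecidableEq ι] (hμ : IsSteinitzWeight v A s μ) {i : ι} (hi : μ i = 0) :
    IsSteinitzWeight v (A.erase i) s μ where
  mem_Icc j hj := hμ.mem_Icc j (mem_of_mem_erase hj)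
  sum_eq := by rw [sum_erase A hi, hμ.sum_eq]
  sum_smul_eq_zero := by rw [sum_erase A (by simp [hi]), hμ.sum_smul_eq_zero]

lemma exists_card_fractional_le [FiniteDimensional K E] (hμ : IsSteinitzWeight v A s μ) :
    ∃ μ', IsSteinitzWeight v A s μ' ∧ #{i ∈ A | 0 < μ' i ∧ μ' i < 1} ≤ finrank K E + 1 := by
  classical
  induction hn : #{i ∈ A | 0 < μ i ∧ μ i < 1} using Nat.strong_induction_on generalizing μ with
  | _ n ih =>
  by_cases hsmall : n ≤ finrank K E + 1
  · exact ⟨μ, hμ, hn ▸ hsmall⟩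
  set F := {i ∈ A | 0 < μ i ∧ μ i < 1}
  -- move along an affine relation among the fractional coordinates until one hits `0` or `1`
  obtain ⟨w, hwF, ⟨j, hjF, hwj⟩, hw, hwv⟩ :=
    exists_relation_sum_zero_of_finrank_succ_lt_card (K := K) v (F := F) (by omega)
  obtain ⟨c, hc, i₀, hi₀, hi₀c⟩ := exists_add_mul_mem_Icc_and_eq_zero_or_one
    (G := {i ∈ F | w i ≠ 0}) ⟨j, mem_filter.2 ⟨hjF, hwj⟩⟩
    (fun i hi => (mem_filter.1 (mem_filter.1 hi).1).2) (fun i hi => (mem_filter.1 hi).2)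
  have hFA : F ⊆ A := filter_subset _ _
  have hwA : ∑ i ∈ A, w i = 0 := by
    rwa [← sum_subset hFA fun i _ hi => hwF i hi]
  have hwvA : ∑ i ∈ A, w i • v i = 0 := by
    rwa [← sum_subset hFA fun i _ hi => by simp [hwF i hi]]
  have hμ' : IsSteinitzWeight v A s (μ + c • w) := by
    refine ⟨fun i hi => ?_, ?_, ?_⟩
    · by_cases hwi : w i = 0
      · simpa [hwi] using hμ.mem_Icc i hi
      · have hiF : i ∈ F := by_contra fun h => hwi (hwF i h)
        simpa using hc i (mem_filter.2 ⟨hiF, hwi⟩)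
    · simp [sum_add_distrib, ← mul_sum, hμ.sum_eq, hwA]
    · simp [add_smul, sum_add_distrib, mul_smul, ← smul_sum, hμ.sum_smul_eq_zero, hwvA]
  refine ih _ ?_ hμ' rfl
  calc #{i ∈ A | 0 < (μ + c • w) i ∧ (μ + c • w) i < 1} ≤ #(F.erase i₀) := by
        refine card_le_card fun i hi => ?_
        obtain ⟨hiA, hi0, hi1⟩ := mem_filter.1 hi
        have hiF : i ∈ F := by
          by_cases hwi : w i = 0
          · simpa [F, hiA, hwi] using And.intro hi0 hi1
          · exact by_contra fun h => hwi (hwF i h)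
        refine mem_erase.2 ⟨?_, hiF⟩
        rintro rfl
        simp only [Pi.add_apply, Pi.smul_apply, smul_eq_mul] at hi0 hi1
        rcases hi₀c with h | h <;> linarith
    _ < n := by
        rw [card_erase_of_mem (mem_filter.1 hi₀).1, ← hn]
        exact Nat.sub_lt (card_pos.2 ⟨j, hjF⟩) one_pos

lemma exists_erase [DecidableEq ι] [FiniteDimensional K E] (hA : A.Nonempty)
    (hμ : IsSteinitzWeight v A ((#A - finrank K E : ℕ) : K) μ) :
    ∃ i ∈ A, ∃ μ', IsSteinitzWeight v (A.erase i) ((#(A.erase i) - finrank K E : ℕ) : K) μ' := by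
  set d := finrank K E
  obtain ⟨i, hi⟩ := hA
  by_cases hAd : #A ≤ d
  · refine ⟨i, hi, 0, fun _ _ => by simp, ?_, by simp⟩
    simp [Nat.sub_eq_zero_of_le (card_erase_le.trans hAd)]
  rw [not_le] at hAd
  -- shrink `μ` to total weight `#A - d - 1`; a vertex of that polytope vanishes somewhere on `A`
  have hpos : (0 : K) < (#A - d : ℕ) := by norm_cast; omega
  set a : K := ((#A - d - 1 : ℕ) : K) / (#A - d : ℕ)
  have ha₀ : 0 ≤ a := by positivity
  have ha₁ : a ≤ 1 := (div_le_one hpos).2 (by norm_cast; omega)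
  have has : a * (#A - d : ℕ) = (#A - d - 1 : ℕ) := div_mul_cancel₀ _ hpos.ne'
  obtain ⟨μ', hμ', hfrac⟩ := (has ▸ hμ.smul ha₀ ha₁).exists_card_fractional_le
  obtain ⟨j, hj, hj0⟩ := exists_eq_zero_of_card_fractional_le hμ'.mem_Icc hfrac <| by
    rw [hμ'.sum_eq, Nat.cast_sub (by omega), Nat.cast_sub (by omega)]
    push_cast
    linarith
  refine ⟨j, hj, μ', ?_⟩
  rw [card_erase_of_mem hj, Nat.sub_right_comm]
  exact hμ'.erase hj0

end IsSteinitzWeight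

end SteinitzPolytope

section Steinitz

variable {E ι : Type*} [NormedAddCommGroup E] [NormedSpace ℝ E]

lemma IsSteinitzWeight.norm_sum_le_card_sub_mul {v : ι → E} {A : Finset ι} {s : ℝ} {μ : ι → ℝ}
    (hμ : IsSteinitzWeight v A s μ) {R : ℝ} (hv : ∀ i ∈ A, ‖v i‖ ≤ R) :
    ‖∑ i ∈ A, v i‖ ≤ (#A - s) * R := by
  calc ‖∑ i ∈ A, v i‖ = ‖∑ i ∈ A, (1 - μ i) • v i‖ := by
        simp [sub_smul, sum_sub_distrib, hμ.sum_smul_eq_zero]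
    _ ≤ ∑ i ∈ A, ‖(1 - μ i) • v i‖ := norm_sum_le _ _
    _ ≤ ∑ i ∈ A, (1 - μ i) * R := sum_le_sum fun i hi => by
        have h1 : 0 ≤ 1 - μ i := sub_nonneg.2 (hμ.mem_Icc i hi).2
        rw [norm_smul, Real.norm_of_nonneg h1]
        exact mul_le_mul_of_nonneg_left (hv i hi) h1
    _ = (#A - s) * R := by simp [sub_mul, sum_sub_distrib, ← sum_mul, hμ.sum_eq]

variable [FiniteDimensional ℝ E] [DecidableEq ι]

lemma IsSteinitzWeight.exists_chain {v : ι → E} {A : Finset ι} {μ : ι → ℝ}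
    (hμ : IsSteinitzWeight v A ((#A - finrank ℝ E : ℕ) : ℝ) μ) {R : ℝ} (hR : 0 ≤ R)
    (hv : ∀ i ∈ A, ‖v i‖ ≤ R) :
    ∃ C : ℕ → Finset ι, Monotone C ∧ (∀ k, C k ⊆ A ∧ #(C k) = min k #A) ∧
      ∀ k, ‖∑ i ∈ C k, v i‖ ≤ finrank ℝ E * R := by
  induction hn : #A generalizing A μ with
  | zero =>
    refine ⟨fun _ => ∅, monotone_const, fun k => by simp, fun k => by simp; positivity⟩
  | succ n ih =>
    obtain ⟨i, hi, μ', hμ'⟩ := hμ.exists_erase (card_pos.1 (by omega))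
    have hn' : #(A.erase i) = n := by rw [card_erase_of_mem hi, hn]; rfl
    obtain ⟨C, hC, hCA, hCv⟩ := ih hμ' (fun j hj => hv j (mem_of_mem_erase hj)) hn'
    refine ⟨fun k => if k ≤ n then C k else A, fun k l hkl => ?_, fun k => ?_, fun k => ?_⟩
    · have hCk : C k ⊆ A := (hCA k).1.trans (erase_subset i A)
      dsimp only
      split_ifs
      · exact hC hkl
      · exact hCk
      · omega
      · exact subset_rfl
    · dsimp only
      split_ifs with hk
      · exact ⟨(hCA k).1.trans (erase_subset i A), by rw [(hCA k).2]; omega⟩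
      · exact ⟨subset_rfl, by omega⟩
    · dsimp only
      split_ifs with hk
      · exact hCv k
      · refine (hμ.norm_sum_le_card_sub_mul hv).trans (mul_le_mul_of_nonneg_right ?_ hR)
        have : #A ≤ (#A - finrank ℝ E : ℕ) + finrank ℝ E := by omega
        have : (#A : ℝ) ≤ (#A - finrank ℝ E : ℕ) + finrank ℝ E := by exact_mod_cast this
        linarith

theorem exists_chain_norm_sum_le [Fintype ι] {v : ι → E} (hv₀ : ∑ i, v i = 0) {R : ℝ}
    (hR : 0 ≤ R) (hv : ∀ i, ‖v i‖ ≤ R) :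
    ∃ C : ℕ → Finset ι, Monotone C ∧ (∀ k, #(C k) = min k (Fintype.card ι)) ∧
      ∀ k, ‖∑ i ∈ C k, v i‖ ≤ finrank ℝ E * R := by
  set n := Fintype.card ι
  set s : ℝ := ((n - finrank ℝ E : ℕ) : ℝ)
  have hμ : IsSteinitzWeight v univ s (fun _ => s / n) := by
    refine ⟨fun _ _ => ⟨by positivity, ?_⟩, ?_, by rw [← smul_sum, hv₀, smul_zero]⟩
    · exact div_le_one_of_le₀ (Nat.cast_le.2 (Nat.sub_le _ _)) (Nat.cast_nonneg n)
    rcases Nat.eq_zero_or_pos n with hn | hn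
    · simp [s, hn]
    · rw [sum_const, card_univ, nsmul_eq_mul, mul_div_cancel₀ _ (by positivity)]
  obtain ⟨C, hC, hCA, hCv⟩ := hμ.exists_chain hR fun i _ => hv i
  exact ⟨C, hC, fun k => (hCA k).2, hCv⟩

end Steinitz

section ZeroSum

lemma exists_nonempty_sum_eq_zero_of_chain {ι M : Type*} [DecidableEq ι] [AddCommGroup M]
    [DecidableEq M] (a : ι → M) {C : ℕ → Finset ι} (hC : Monotone C) {N : ℕ}
    (hCN : ∀ k, #(C k) = min k N) {T : Finset M} (hT : ∀ k ≤ N, ∑ i ∈ C k, a i ∈ T)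
    (hTN : #T ≤ N) : ∃ S : Finset ι, S.Nonempty ∧ ∑ i ∈ S, a i = 0 := by
  obtain ⟨k, hk, l, hl, hkl, heq⟩ := exists_ne_map_eq_of_card_lt_of_maps_to
    (s := range (N + 1)) (by rwa [card_range, Nat.lt_succ_iff])
    fun k hk => hT k (Nat.lt_succ_iff.1 (mem_range.1 hk))
  rw [mem_range] at hk hl
  wlog hlt : k < l generalizing k l
  · exact this l hl k hk hkl.symm heq.symm (by omega)
  refine ⟨C l \ C k, ?_, by rw [sum_sdiff_eq_sub (hC hlt.le), heq, sub_self]⟩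
  rw [← card_pos, card_sdiff_of_subset (hC hlt.le), hCN, hCN]
  omega

theorem exists_chain_abs_sum_apply_le {ι : Type*} [Fintype ι] [Nonempty ι] [DecidableEq ι]
    {d Δ Ξ : ℕ} (a : ι → Fin d → ℤ) (ha : ∀ i j, |a i j| ≤ Δ) (hb : ∀ j, |∑ i, a i j| ≤ Ξ) :
    ∃ C : ℕ → Finset ι, Monotone C ∧ (∀ k, #(C k) = min k (Fintype.card ι)) ∧
      ∀ k j, |(∑ i ∈ C k, a i) j| ≤ ((d * (Δ + Ξ) + Ξ : ℕ) : ℤ) := by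
  set N := Fintype.card ι
  set b : Fin d → ℤ := ∑ i, a i
  have hN : (1 : ℝ) ≤ N := Nat.one_le_cast.2 Fintype.card_pos
  have hbΞ : ∀ j, |(b j : ℝ)| ≤ Ξ := fun j => by
    exact_mod_cast (Finset.sum_apply j univ a).symm ▸ hb j
  -- the Steinitz lemma applies to the columns centred by their mean `b / N`
  set v : ι → Fin d → ℝ := fun i j => a i j - b j / N
  have hv₀ : ∑ i, v i = 0 := by
    ext j
    simp only [v, Finset.sum_apply, sum_sub_distrib, sum_const, card_univ, nsmul_eq_mul, b]
    push_cast
    rw [mul_div_cancel₀ _ (by positivity), sub_self, Pi.zero_apply]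
  have hv : ∀ i, ‖v i‖ ≤ Δ + Ξ := fun i => (pi_norm_le_iff_of_nonneg (by positivity)).2 fun j => by
    rw [Real.norm_eq_abs]
    refine (abs_sub _ _).trans (add_le_add (by exact_mod_cast ha i j) ?_)
    rw [abs_div, Nat.abs_cast]
    exact (div_le_self (abs_nonneg _) hN).trans (hbΞ j)
  obtain ⟨C, hC, hCN, hCv⟩ := exists_chain_norm_sum_le hv₀ (by positivity) hv
  rw [finrank_fin_fun] at hCv
  refine ⟨C, hC, hCN, fun k j => ?_⟩
  have hsplit : ((∑ i ∈ C k, a i) j : ℝ) = (∑ i ∈ C k, v i) j + #(C k) * (b j / N) := by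
    simp [v, Finset.sum_apply, sum_sub_distrib]
  have hvk : |(∑ i ∈ C k, v i) j| ≤ d * (Δ + Ξ) := by
    simpa only [Real.norm_eq_abs] using (norm_le_pi_norm _ j).trans (hCv k)
  have hCk : (#(C k) : ℝ) ≤ N := by rw [hCN]; exact_mod_cast min_le_right k N
  have hbk : |(#(C k) : ℝ) * (b j / N)| ≤ Ξ :=
    calc |(#(C k) : ℝ) * (b j / N)| = #(C k) / N * |(b j : ℝ)| := by
          rw [abs_mul, abs_div, Nat.abs_cast, Nat.abs_cast]; ring
      _ ≤ 1 * Ξ := mul_le_mul (div_le_one_of_le₀ hCk (by positivity)) (hbΞ j)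
          (abs_nonneg _) zero_le_one
      _ = Ξ := one_mul _
  have : |((∑ i ∈ C k, a i) j : ℝ)| ≤ ((d * (Δ + Ξ) + Ξ : ℕ) : ℝ) := by
    rw [hsplit]
    push_cast
    linarith [abs_add_le ((∑ i ∈ C k, v i) j) (#(C k) * (b j / N))]
  exact_mod_cast this

theorem exists_nonempty_sum_eq_zero {ι : Type*} [Fintype ι] [DecidableEq ι] {d Δ Ξ : ℕ}
    (a : ι → Fin d → ℤ) (ha : ∀ i j, |a i j| ≤ Δ) (hb : ∀ j, |∑ i, a i j| ≤ Ξ)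
    (hcard : (2 * (d * (Δ + Ξ) + Ξ) + 1) ^ d ≤ Fintype.card ι) :
    ∃ S : Finset ι, S.Nonempty ∧ ∑ i ∈ S, a i = 0 := by
  set P := d * (Δ + Ξ) + Ξ
  have : Nonempty ι := Fintype.card_pos_iff.1 (lt_of_lt_of_le (Nat.one_le_pow _ _ (by omega)) hcard)
  obtain ⟨C, hC, hCN, hCa⟩ := exists_chain_abs_sum_apply_le a ha hb
  have hbox : #(Fintype.piFinset fun _ : Fin d => Icc (-(P : ℤ)) P) = (2 * P + 1) ^ d := by
    simp only [Fintype.card_piFinset, Int.card_Icc, prod_const, card_univ, Fintype.card_fin]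
    congr 1
    omega
  exact exists_nonempty_sum_eq_zero_of_chain a hC hCN
    (fun k _ => Fintype.mem_piFinset.2 fun j => mem_Icc.2 (abs_le.1 (hCa k j))) (hbox ▸ hcard)

end ZeroSum

section Graver

variable {d t : ℕ}

lemma sum_sigma_single_eq_self {x : Fin t → ℤ} (hx : 0 ≤ x) :
    ∑ s : Σ j, Fin (x j).toNat, Pi.single s.1 (1 : ℤ) = x := by
  ext j
  rw [Finset.sum_apply, Fintype.sum_sigma]
  simpa [Pi.single_apply] using hx j

theorem exists_kernel_vector_le_of_le_sum {Δ Ξ : ℕ} {D : Matrix (Fin d) (Fin t) ℤ}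
    (hD : ∀ i j, |D i j| ≤ Δ) {b : Fin d → ℤ} (hb : ∀ j, |b j| ≤ Ξ) {x : Fin t → ℤ} (hx : 0 ≤ x)
    (hDx : D *ᵥ x = b) (hbig : ((2 * (d * (Δ + Ξ) + Ξ) + 1) ^ d : ℕ) ≤ ∑ i, x i) :
    ∃ y, y ≠ 0 ∧ 0 ≤ y ∧ y ≤ x ∧ D *ᵥ y = 0 := by
  classical
  -- `x` as a multiset of coordinate indices, each index `j` occurring `x j` times
  set e : (Σ j, Fin (x j).toNat) → Fin t → ℤ := fun s => Pi.single s.1 1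
  have he : ∀ s, 0 ≤ e s := fun s => Pi.single_nonneg.2 zero_le_one
  obtain ⟨S, ⟨s, hs⟩, hS⟩ := exists_nonempty_sum_eq_zero (fun s => D *ᵥ e s)
    (fun s j => by simpa [e, mulVec_single_one] using hD j s.1)
    (fun j => by
      rw [← Finset.sum_apply, ← mulVec_sum, sum_sigma_single_eq_self hx, hDx]
      exact hb j)
    (by
      have hcast : ∀ j, ((x j).toNat : ℤ) = x j := fun j => Int.toNat_of_nonneg (hx j)
      rw [Fintype.card_sigma, ← Nat.cast_le (α := ℤ), Nat.cast_sum]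
      simpa only [Fintype.card_fin, hcast] using hbig)
  refine ⟨∑ s ∈ S, e s, fun h0 => ?_, sum_nonneg fun s _ => he s, ?_, by rw [mulVec_sum, hS]⟩
  · have := (h0 ▸ single_le_sum (fun s _ => he s) hs) s.1
    simp [e] at this
  · calc ∑ s ∈ S, e s ≤ ∑ s, e s :=
          sum_le_sum_of_subset_of_nonneg (subset_univ S) fun s _ _ => he s
      _ = x := sum_sigma_single_eq_self hx

theorem exists_le_mulVec_eq_sum_lt {Δ Ξ : ℕ} {D : Matrix (Fin d) (Fin t) ℤ}
    (hD : ∀ i j, |D i j| ≤ Δ) {b : Fin d → ℤ} (hb : ∀ j, |b j| ≤ Ξ) {x : Fin t → ℤ} (hx : 0 ≤ x)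
    (hDx : D *ᵥ x = b) :
    ∃ xbar, 0 ≤ xbar ∧ xbar ≤ x ∧ D *ᵥ xbar = b ∧
      ∑ i, xbar i < ((2 * (d * (Δ + Ξ) + Ξ) + 1) ^ d : ℕ) := by
  classical
  set S : Finset (Fin t → ℤ) := {y ∈ Icc 0 x | D *ᵥ y = b}
  obtain ⟨xbar, hxbarx, hmin⟩ := S.exists_le_minimal (mem_filter.2 ⟨mem_Icc.2 ⟨hx, le_rfl⟩, hDx⟩)
  obtain ⟨hxbar, hDxbar⟩ := mem_filter.1 hmin.prop
  refine ⟨xbar, (mem_Icc.1 hxbar).1, hxbarx, hDxbar, not_le.1 fun hbig => ?_⟩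
  obtain ⟨y, hy0, hy, hyx, hDy⟩ :=
    exists_kernel_vector_le_of_le_sum hD hb (mem_Icc.1 hxbar).1 hDxbar hbig
  have hmem : xbar - y ∈ S :=
    mem_filter.2 ⟨mem_Icc.2 ⟨sub_nonneg.2 hyx, (sub_le_self _ hy).trans hxbarx⟩,
      by rw [mulVec_sub, hDy, sub_zero, hDxbar]⟩
  exact hy0 (le_antisymm (by simpa using hmin.le_of_le hmem (sub_le_self _ hy)) hy)

lemma nonneg_and_le_of_conformal {a b : ℤ} (hb : 0 ≤ b) (hab : 0 ≤ a * b) (habs : |a| ≤ |b|) :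
    0 ≤ a ∧ a ≤ b := by
  rw [abs_of_nonneg hb] at habs
  rcases hb.eq_or_lt with rfl | hb
  · have := abs_nonneg a
    constructor <;> linarith [abs_nonpos_iff.1 habs]
  · have ha := nonneg_of_mul_nonneg_left hab hb
    exact ⟨ha, abs_of_nonneg ha ▸ habs⟩

lemma exists_graver_le {D : Matrix (Fin d) (Fin t) ℤ} {z : Fin t → ℤ} (hz₀ : z ≠ 0) (hz : 0 ≤ z)
    (hDz : D *ᵥ z = 0) : ∃ g ∈ Graver D, 0 ≤ g ∧ g ≤ z := by
  classical
  set S : Finset (Fin t → ℤ) := {g ∈ Icc 0 z | g ≠ 0 ∧ D *ᵥ g = 0}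
  obtain ⟨g, hgz, hmin⟩ := S.exists_le_minimal (mem_filter.2 ⟨mem_Icc.2 ⟨hz, le_rfl⟩, hz₀, hDz⟩)
  obtain ⟨hg, hg₀, hDg⟩ := mem_filter.1 hmin.prop
  refine ⟨g, ⟨hg₀, hDg, fun h hh₀ hDh hconf => ?_⟩, (mem_Icc.1 hg).1, hgz⟩
  have hhg : 0 ≤ h ∧ h ≤ g := by
    have := fun i => nonneg_and_le_of_conformal ((mem_Icc.1 hg).1 i) (hconf i).1 (hconf i).2
    exact ⟨fun i => (this i).1, fun i => (this i).2⟩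
  exact le_antisymm hhg.2
    (hmin.le_of_le (mem_filter.2 ⟨mem_Icc.2 ⟨hhg.1, hhg.2.trans hgz⟩, hh₀, hDh⟩) hhg.2)

theorem exists_graver_decomposition (D : Matrix (Fin d) (Fin t) ℤ) {z : Fin t → ℤ} (hz : 0 ≤ z)
    (hDz : D *ᵥ z = 0) :
    ∃ μ : Multiset (Fin t → ℤ), (∀ g ∈ μ, g ∈ Graver D ∧ 0 ≤ g) ∧ z = μ.sum := by
  induction hn : (∑ i, z i).toNat using Nat.strong_induction_on generalizing z with
  | _ n ih =>
  rcases eq_or_ne z 0 with rfl | hz₀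
  · exact ⟨0, by simp, by simp⟩
  obtain ⟨g, hg, hg₀, hgz⟩ := exists_graver_le hz₀ hz hDz
  have hsum : 0 < ∑ i, g i := Fintype.sum_pos (lt_of_le_of_ne hg₀ (Ne.symm hg.1))
  have hlt : (∑ i, (z - g) i).toNat < n := by
    have hle : ∑ i, g i ≤ ∑ i, z i := sum_le_sum fun i _ => hgz i
    rw [← hn]
    simp only [Pi.sub_apply, sum_sub_distrib]
    omega
  obtain ⟨μ, hμ, hzg⟩ := ih _ hlt (sub_nonneg.2 hgz) (by rw [mulVec_sub, hDz, hg.2.1, sub_self]) rfl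
  refine ⟨g ::ₘ μ, ?_, by rw [Multiset.sum_cons, ← hzg, add_sub_cancel]⟩
  simpa [hg, hg₀] using hμ

end Graver

/-- There is a universal constant `c > 0` such that for all `d, t ≥ 1` and
`Δ, Ξ ≥ 1`: whenever `D ∈ ℤ^{d×t}` has entries bounded by `Δ`, `b ∈ ℤᵈ` has
`∞`-norm at most `Ξ` and `x ∈ ℤ₊ᵗ` satisfies `D x = b`, there are a nonnegative
solution `x̄` of `D x̄ = b` with `‖x̄‖_∞ ≤ (c·d·(Δ+Ξ))^d` and a finite multiset `μ`
of nonnegative Graver basis elements of `D` with `x = x̄ + Σ_{g ∈ μ} g`. -/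
theorem solution_decomposition :
    ∃ c : ℕ, 0 < c ∧ ∀ d t Δ Ξ : ℕ, 1 ≤ d → 1 ≤ t → 1 ≤ Δ → 1 ≤ Ξ →
      ∀ D : Matrix (Fin d) (Fin t) ℤ, (∀ i j, |D i j| ≤ (Δ : ℤ)) →
      ∀ b : Fin d → ℤ, (∀ j, |b j| ≤ (Ξ : ℤ)) →
      ∀ x : Fin t → ℤ, (∀ i, 0 ≤ x i) → D.mulVec x = b →
        ∃ xbar : Fin t → ℤ, (∀ i, 0 ≤ xbar i) ∧ D.mulVec xbar = b ∧
          (∀ i, |xbar i| ≤ ((c * d * (Δ + Ξ) : ℕ) : ℤ) ^ d) ∧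
          ∃ μ : Multiset (Fin t → ℤ),
            (∀ g ∈ μ, g ∈ Graver D ∧ ∀ i, 0 ≤ g i) ∧
            x = xbar + μ.sum := by
  refine ⟨6, by norm_num, fun d t Δ Ξ hd _ _ hΞ D hD b hb x hx hDx => ?_⟩
  obtain ⟨xbar, hxbar, hxbarx, hDxbar, hsmall⟩ := exists_le_mulVec_eq_sum_lt hD hb hx hDx
  obtain ⟨μ, hμ, hsum⟩ := exists_graver_decomposition D (sub_nonneg.2 hxbarx)
    (by rw [mulVec_sub, hDx, hDxbar, sub_self])
  refine ⟨xbar, hxbar, hDxbar, fun i => ?_, μ, hμ, by rw [← hsum, add_sub_cancel]⟩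
  have hbase : 2 * (d * (Δ + Ξ) + Ξ) + 1 ≤ 6 * d * (Δ + Ξ) := by nlinarith
  calc |xbar i| = xbar i := abs_of_nonneg (hxbar i)
    _ ≤ ∑ j, xbar j := single_le_sum (fun j _ => hxbar j) (mem_univ i)
    _ ≤ ((6 * d * (Δ + Ξ) : ℕ) : ℤ) ^ d := by
      rw [← Nat.cast_pow]
      exact hsmall.le.trans (Nat.cast_le.2 (Nat.pow_le_pow_left hbase d))
end

section
/- Let d, t, Δ ≥ 1 be integers, let D ∈ ℤ^{d×t} have all entries of absolute value at most Δ, and let D_Δ be the matrix whose columns are exactly the vectors of box(d, Δ), each appearing once. If a multiset b_1, …, b_ℓ is a faithful decomposition of b ∈ ℤ^d with respect to D_Δ of order Ξ, then it is also a faithful decomposition of b with respect to D of order Ξ. -/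
set_option linter.unusedSectionVars false
set_option linter.unusedVariables false

/-- Split a target `m` among nonnegative amounts `a j`, `j ∈ s`. -/
lemma splitFinset {α : Type*} [DecidableEq α] (s : Finset α) (a : α → ℤ)
    (ha : ∀ j, 0 ≤ a j) : ∀ m : ℤ, 0 ≤ m → m ≤ ∑ j ∈ s, a j →
    ∃ c : α → ℤ, (∀ j ∈ s, 0 ≤ c j ∧ c j ≤ a j) ∧ ∑ j ∈ s, c j = m := by
  classical
  induction s using Finset.induction with
  | empty =>
    intro m hm hle
    simp only [Finset.sum_empty] at hle
    refine ⟨0, fun j hj => by simp at hj, ?_⟩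
    simp only [Finset.sum_empty]
    omega
  | @insert j s hj ih =>
    intro m hm hle
    rw [Finset.sum_insert hj] at hle
    have hs : 0 ≤ ∑ j ∈ s, a j := Finset.sum_nonneg fun j _ => ha j
    set m1 := min m (a j) with hm1
    have h1 : 0 ≤ m1 := le_min hm (ha j)
    have h2 : 0 ≤ m - m1 := by have := min_le_left m (a j); omega
    have h3 : m - m1 ≤ ∑ j ∈ s, a j := by
      rcases le_total m (a j) with h | h
      · simp [hm1, min_eq_left h]; omega
      · simp [hm1, min_eq_right h]; omega
    obtain ⟨c, hc1, hc2⟩ := ih (m - m1) h2 h3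
    refine ⟨Function.update c j m1, ?_, ?_⟩
    · intro j' hj'
      rcases Finset.mem_insert.mp hj' with rfl | hj'
      · simp [Function.update_self]; exact ⟨h1, min_le_right _ _⟩
      · have hne : j' ≠ j := ne_of_mem_of_not_mem hj' hj
        rw [Function.update_of_ne hne]
        exact hc1 j' hj'
    · rw [Finset.sum_insert hj, Function.update_self]
      have hs2 : ∑ j' ∈ s, Function.update c j m1 j' = ∑ j' ∈ s, c j' :=
        Finset.sum_congr rfl fun j' hj' =>
          Function.update_of_ne (ne_of_mem_of_not_mem hj' hj) _ _
      rw [hs2, hc2]; ring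

lemma multiset_fun_sum_nonneg {ι : Type} (M : Multiset (ι → ℤ))
    (h : ∀ f ∈ M, ∀ i, 0 ≤ f i) : ∀ i, 0 ≤ M.sum i := by
  induction M using Multiset.induction with
  | empty => intro i; simp
  | @cons f M ih =>
    intro i
    rw [Multiset.sum_cons]
    have := h f (Multiset.mem_cons_self _ _) i
    have := ih (fun g hg => h g (Multiset.mem_cons_of_mem hg)) i
    simp only [Pi.add_apply]
    omega

section Push

variable {t : ℕ} {ι : Type} [Fintype ι] [DecidableEq ι] (φ : Fin t → ι)

/-- Pushforward of a vector along the fiber map. -/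
def push (x : Fin t → ℤ) : ι → ℤ :=
  fun i => ∑ j ∈ Finset.univ.filter (fun j => φ j = i), x j

lemma push_sub (x y : Fin t → ℤ) : push φ (x - y) = push φ x - push φ y := by
  funext i
  simp [push, Finset.sum_sub_distrib]

lemma push_nonneg {x : Fin t → ℤ} (hx : ∀ j, 0 ≤ x j) : ∀ i, 0 ≤ push φ x i :=
  fun i => Finset.sum_nonneg fun j _ => hx j

lemma push_eq_zero {x : Fin t → ℤ} (hx : ∀ j, 0 ≤ x j) (h : push φ x = 0) : x = 0 := by
  funext j
  have h1 : push φ x (φ j) = 0 := by rw [h]; rfl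
  have := (Finset.sum_eq_zero_iff_of_nonneg (fun j' _ => hx j')).mp h1 j
    (by simp)
  exact this

/-- Split `x` so that a prescribed pushforward `y1 ≤ push x` is achieved. -/
lemma push_split {x : Fin t → ℤ} (hx : ∀ j, 0 ≤ x j) (y1 : ι → ℤ)
    (hy1 : ∀ i, 0 ≤ y1 i) (hle : ∀ i, y1 i ≤ push φ x i) :
    ∃ x1 : Fin t → ℤ, (∀ j, 0 ≤ x1 j ∧ x1 j ≤ x j) ∧ push φ x1 = y1 := by
  have H : ∀ i : ι, ∃ c : Fin t → ℤ,
      (∀ j ∈ Finset.univ.filter (fun j => φ j = i), 0 ≤ c j ∧ c j ≤ x j) ∧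
      ∑ j ∈ Finset.univ.filter (fun j => φ j = i), c j = y1 i := by
    intro i
    exact splitFinset _ x hx (y1 i) (hy1 i) (hle i)
  choose c hc1 hc2 using H
  refine ⟨fun j => c (φ j) j, ?_, ?_⟩
  · intro j
    exact hc1 (φ j) j (by simp)
  · funext i
    rw [show push φ (fun j => c (φ j) j) i
        = ∑ j ∈ Finset.univ.filter (fun j => φ j = i), c (φ j) j from rfl,
      ← hc2 i]
    apply Finset.sum_congr rfl
    intro j hj
    rw [Finset.mem_filter] at hj
    rw [hj.2]

/-- Transport a decomposition of `push x` back to a decomposition of `x`. -/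
lemma transport {d : ℕ} (M : Multiset ((Fin d → ℤ) × (ι → ℤ))) :
    ∀ (x : Fin t → ℤ), (∀ j, 0 ≤ x j) → (∀ p ∈ M, ∀ i, 0 ≤ p.2 i) →
    (M.map Prod.snd).sum = push φ x →
    ∃ N : Multiset ((Fin d → ℤ) × (Fin t → ℤ)),
      N.map Prod.fst = M.map Prod.fst ∧ (N.map Prod.snd).sum = x ∧
      ∀ p ∈ N, (∀ j, 0 ≤ p.2 j) ∧ ∃ q ∈ M, q.1 = p.1 ∧ push φ p.2 = q.2 := by
  induction M using Multiset.induction with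
  | empty =>
    intro x hx _ hsum
    simp only [Multiset.map_zero, Multiset.sum_zero] at hsum
    refine ⟨0, by simp, ?_, by simp⟩
    simp [push_eq_zero φ hx hsum.symm]
  | @cons q M ih =>
    intro x hx hM hsum
    simp only [Multiset.map_cons, Multiset.sum_cons] at hsum
    have hMnn : ∀ i, 0 ≤ (M.map Prod.snd).sum i := by
      intro i
      apply multiset_fun_sum_nonneg
      intro f hf
      obtain ⟨p, hp, rfl⟩ := Multiset.mem_map.mp hf
      exact hM p (Multiset.mem_cons_of_mem hp)
    have hqnn : ∀ i, 0 ≤ q.2 i := hM q (Multiset.mem_cons_self _ _)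
    have hle : ∀ i, q.2 i ≤ push φ x i := by
      intro i
      have := congrFun hsum i
      simp only [Pi.add_apply] at this
      have := hMnn i
      omega
    obtain ⟨x1, hx1, hpush⟩ := push_split φ hx q.2 hqnn hle
    have hx2 : ∀ j, 0 ≤ (x - x1) j := fun j => by
      simp only [Pi.sub_apply]; have := hx1 j; omega
    have hsum2 : (M.map Prod.snd).sum = push φ (x - x1) := by
      rw [push_sub, hpush]
      have : (M.map Prod.snd).sum = push φ x - q.2 := by
        rw [← hsum]; abel
      exact this
    obtain ⟨N, hN1, hN2, hN3⟩ := ih (x - x1) hx2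
      (fun p hp => hM p (Multiset.mem_cons_of_mem hp)) hsum2
    refine ⟨(q.1, x1) ::ₘ N, ?_, ?_, ?_⟩
    · simp [hN1]
    · simp only [Multiset.map_cons, Multiset.sum_cons, hN2]
      abel
    · intro p hp
      rcases Multiset.mem_cons.mp hp with rfl | hp
      · exact ⟨fun j => (hx1 j).1, q, Multiset.mem_cons_self _ _, rfl, hpush⟩
      · obtain ⟨h1, r, hr, h2, h3⟩ := hN3 p hp
        exact ⟨h1, r, Multiset.mem_cons_of_mem hr, h2, h3⟩

end Push

/-- `FaithfulDecomp D Ξ b L` : the multiset `L` of vectors in `ℤᵈ` is a faithful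
decomposition of `b` with respect to the matrix `D` (with columns indexed by an
arbitrary finite type `ι`) of order `Ξ`. -/
def FaithfulDecomp {d : ℕ} {ι : Type} [Fintype ι] (D : Matrix (Fin d) ι ℤ) (Ξ : ℤ)
    (b : Fin d → ℤ) (L : Multiset (Fin d → ℤ)) : Prop :=
  L.sum = b ∧
  (∀ b' ∈ L, ∀ j, 0 ≤ b' j * b j ∧ |b' j| ≤ |b j|) ∧
  (∀ b' ∈ L, ∀ j, |b' j| ≤ Ξ) ∧
  ∀ x : ι → ℤ, (∀ i, 0 ≤ x i) → D.mulVec x = b →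
    ∃ Mset : Multiset ((Fin d → ℤ) × (ι → ℤ)),
      Mset.map Prod.fst = L ∧ (Mset.map Prod.snd).sum = x ∧
      ∀ p ∈ Mset, (∀ i, 0 ≤ p.2 i) ∧ D.mulVec p.2 = p.1

/-- Let `D ∈ ℤ^{d×t}` have entries of absolute value at most `Δ` and let `D_Δ` be a
matrix whose columns are exactly the vectors of `box(d, Δ)`, each appearing once
(formalized by a finite index type `ι` and an injective enumeration `e` of
`box(d, Δ)`).  Every faithful decomposition of `b` with respect to `D_Δ` of order
`Ξ` is also a faithful decomposition of `b` with respect to `D` of order `Ξ`. -/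
theorem faithful_decomposition_standard_matrix
    (d t Δ : ℕ) (hd : 1 ≤ d) (ht : 1 ≤ t) (hΔ : 1 ≤ Δ)
    (D : Matrix (Fin d) (Fin t) ℤ) (hD : ∀ i j, |D i j| ≤ (Δ : ℤ))
    (ι : Type) [Fintype ι] (e : ι → (Fin d → ℤ)) (he : Function.Injective e)
    (hrange : Set.range e = {x : Fin d → ℤ | ∀ j, |x j| ≤ (Δ : ℤ)})
    (DΔ : Matrix (Fin d) ι ℤ) (hDΔ : ∀ j i, DΔ j i = e i j)
    (Ξ : ℤ) (b : Fin d → ℤ) (L : Multiset (Fin d → ℤ))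
    (hL : FaithfulDecomp DΔ Ξ b L) :
    FaithfulDecomp D Ξ b L := by
  classical
  obtain ⟨hsum, hconf, hbound, hdecomp⟩ := hL
  have hcol : ∀ j : Fin t, ∃ i : ι, e i = fun i' => D i' j := by
    intro j
    have hmem : (fun i' => D i' j) ∈ Set.range e := by
      rw [hrange]; intro i'; exact hD i' j
    exact hmem
  choose φ hφ using hcol
  have key : ∀ x : Fin t → ℤ, DΔ.mulVec (push φ x) = D.mulVec x := by
    intro x
    funext i
    simp only [Matrix.mulVec, dotProduct]
    calc ∑ i', DΔ i i' * push φ x i'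
        = ∑ i', ∑ j ∈ Finset.univ.filter (fun j => φ j = i'), e (φ j) i * x j := by
          apply Finset.sum_congr rfl
          intro i' _
          rw [hDΔ, push, Finset.mul_sum]
          apply Finset.sum_congr rfl
          intro j hj
          rw [(Finset.mem_filter.mp hj).2]
      _ = ∑ j, e (φ j) i * x j := Finset.sum_fiberwise _ _ _
      _ = ∑ j, D i j * x j := by
          apply Finset.sum_congr rfl
          intro j _
          rw [hφ j]
  refine ⟨hsum, hconf, hbound, ?_⟩
  intro x hx hDx
  obtain ⟨Mset, hM1, hM2, hM3⟩ := hdecomp (push φ x) (push_nonneg φ hx)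
    (by rw [key, hDx])
  obtain ⟨N, hN1, hN2, hN3⟩ := transport φ Mset x hx (fun p hp => (hM3 p hp).1)
    (by rw [hM2])
  refine ⟨N, by rw [hN1, hM1], hN2, ?_⟩
  intro p hp
  obtain ⟨hnn, q, hq, hq1, hq2⟩ := hN3 p hp
  refine ⟨hnn, ?_⟩
  rw [← key p.2, hq2, (hM3 q hq).2, hq1]
end

section
/- Let D ∈ ℤ^{d×(t+1)} be a matrix whose t-th and (t+1)-th columns are equal, and let D' ∈ ℤ^{d×t} consist of the first t columns of D. If a multiset b_1, …, b_ℓ is a faithful decomposition of b ∈ ℤ^d with respect to D' of order Ξ, then it is also a faithful decomposition of b with respect to D of order Ξ. -/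
open Finset

theorem exists_sum_eq_of_le_sum {ι : Type*} [DecidableEq ι] (s : Finset ι) {x : ι → ℤ}
    (hx : 0 ≤ x) {a : ℤ} (ha : 0 ≤ a) (has : a ≤ ∑ i ∈ s, x i) :
    ∃ z : ι → ℤ, 0 ≤ z ∧ z ≤ x ∧ ∑ i ∈ s, z i = a := by
  induction s using Finset.induction_on generalizing a with
  | empty => exact ⟨0, le_rfl, hx, by simp only [sum_empty] at has ⊢; omega⟩
  | insert i s hi ih =>
    rw [sum_insert hi] at has
    have hs : 0 ≤ ∑ j ∈ s, x j := sum_nonneg fun j _ => hx j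
    obtain ⟨z, hz0, hzx, hzs⟩ :=
      ih (a := a - min (x i) a) (by omega) (by have := hx i; omega)
    refine ⟨Function.update z i (min (x i) a), fun j => ?_, fun j => ?_, ?_⟩
    · rcases eq_or_ne j i with rfl | hj
      · simpa using le_min (hx j) ha
      · simpa [hj] using hz0 j
    · rcases eq_or_ne j i with rfl | hj
      · simp
      · simpa [hj] using hzx j
    · rw [sum_insert hi, Function.update_self, sum_update_of_notMem hi, hzs]
      ring

section FiberSum

variable {ι κ : Type*} [Fintype ι] [DecidableEq κ]

def fiberSum (σ : ι → κ) (x : ι → ℤ) : κ → ℤ :=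
  fun k => ∑ i with σ i = k, x i

theorem fiberSum_sub (σ : ι → κ) (x y : ι → ℤ) :
    fiberSum σ (x - y) = fiberSum σ x - fiberSum σ y := by
  funext k
  simp [fiberSum, sum_sub_distrib]

theorem fiberSum_nonneg (σ : ι → κ) {x : ι → ℤ} (hx : 0 ≤ x) : 0 ≤ fiberSum σ x :=
  fun _ => sum_nonneg fun i _ => hx i

theorem le_fiberSum (σ : ι → κ) {x : ι → ℤ} (hx : 0 ≤ x) (i : ι) : x i ≤ fiberSum σ x (σ i) :=
  single_le_sum (fun j _ => hx j) (mem_filter.2 ⟨mem_univ i, rfl⟩)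

theorem Matrix.mulVec_submatrix_id_eq_mulVec_fiberSum {m : Type*} [Fintype κ]
    (D : Matrix m κ ℤ) (σ : ι → κ) (x : ι → ℤ) :
    (D.submatrix id σ).mulVec x = D.mulVec (fiberSum σ x) := by
  funext j
  simp only [Matrix.mulVec, dotProduct, Matrix.submatrix_apply, id, fiberSum, mul_sum]
  rw [← sum_fiberwise univ σ]
  refine sum_congr rfl fun k _ => sum_congr rfl fun i hi => ?_
  rw [(mem_filter.1 hi).2]

theorem exists_le_fiberSum_eq (σ : ι → κ) {x : ι → ℤ} (hx : 0 ≤ x) {y : κ → ℤ} (hy : 0 ≤ y)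
    (hyx : y ≤ fiberSum σ x) : ∃ z : ι → ℤ, 0 ≤ z ∧ z ≤ x ∧ fiberSum σ z = y := by
  classical
  choose z hz0 hzx hzy using fun k => exists_sum_eq_of_le_sum {i | σ i = k} hx (hy k) (hyx k)
  refine ⟨fun i => z (σ i) i, fun i => hz0 _ i, fun i => hzx _ i, funext fun k => ?_⟩
  rw [← hzy k, fiberSum]
  exact sum_congr rfl fun i hi => by rw [(mem_filter.1 hi).2]

theorem exists_lift_of_sum_eq_fiberSum {β : Type*} (σ : ι → κ) (M : Multiset (β × (κ → ℤ)))
    (hM : ∀ q ∈ M, 0 ≤ q.2) {x : ι → ℤ} (hx : 0 ≤ x) (hsum : (M.map Prod.snd).sum = fiberSum σ x) :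
    ∃ M' : Multiset (β × (ι → ℤ)), M'.map (fun p => (p.1, fiberSum σ p.2)) = M ∧
      (M'.map Prod.snd).sum = x ∧ ∀ p ∈ M', 0 ≤ p.2 := by
  induction M using Multiset.induction_on generalizing x with
  | empty =>
    have hx0 : x = 0 := funext fun i =>
      le_antisymm (by simpa [← hsum] using le_fiberSum σ hx i) (hx i)
    exact ⟨0, by simp, by simp [hx0], by simp⟩
  | cons q M ih =>
    rw [Multiset.map_cons, Multiset.sum_cons] at hsum
    have hrest : 0 ≤ (M.map Prod.snd).sum := Multiset.sum_nonneg fun y hy => by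
      obtain ⟨p, hp, rfl⟩ := Multiset.mem_map.1 hy
      exact hM p (Multiset.mem_cons_of_mem hp)
    obtain ⟨z, hz0, hzx, hzq⟩ := exists_le_fiberSum_eq σ hx (hM q (Multiset.mem_cons_self _ _))
      (by rw [← hsum]; exact le_add_of_nonneg_right hrest)
    obtain ⟨M', hM'M, hM'x, hM'0⟩ := ih (fun p hp => hM p (Multiset.mem_cons_of_mem hp))
      (sub_nonneg.2 hzx) (by rw [fiberSum_sub, hzq, ← hsum]; abel)
    refine ⟨(q.1, z) ::ₘ M', by simp [hzq, hM'M], by simp [hM'x], fun p hp => ?_⟩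
    rcases Multiset.mem_cons.1 hp with rfl | hp
    exacts [hz0, hM'0 p hp]

end FiberSum

theorem FaithfulDecomp.submatrix {d : ℕ} {ι κ : Type} [Fintype ι] [Fintype κ]
    {D : Matrix (Fin d) κ ℤ} {Ξ : ℤ} {b : Fin d → ℤ} {L : Multiset (Fin d → ℤ)} (σ : ι → κ)
    (h : FaithfulDecomp D Ξ b L) : FaithfulDecomp (D.submatrix id σ) Ξ b L := by
  classical
  obtain ⟨hsum, hconf, hbound, hdecomp⟩ := h
  refine ⟨hsum, hconf, hbound, fun x hx hDx => ?_⟩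
  rw [Matrix.mulVec_submatrix_id_eq_mulVec_fiberSum] at hDx
  obtain ⟨M, hML, hMx, hM⟩ := hdecomp (fiberSum σ x) (fiberSum_nonneg σ hx) hDx
  obtain ⟨M', hM'M, hM'x, hM'0⟩ :=
    exists_lift_of_sum_eq_fiberSum σ M (fun q hq => (hM q hq).1) hx hMx
  refine ⟨M', by rw [← hML, ← hM'M, Multiset.map_map]; rfl, hM'x, fun p hp => ⟨hM'0 p hp, ?_⟩⟩
  rw [Matrix.mulVec_submatrix_id_eq_mulVec_fiberSum]
  exact (hM _ (hM'M ▸ Multiset.mem_map_of_mem _ hp)).2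

/-- Let `D ∈ ℤ^{d×(t+1)}` have equal `t`-th and `(t+1)`-th columns (one-based; in
zero-based indexing these are the columns `t - 1` and `t`), and let
`D' ∈ ℤ^{d×t}` consist of the first `t` columns of `D`.  Then every faithful
decomposition of `b` with respect to `D'` of order `Ξ` is also a faithful
decomposition of `b` with respect to `D` of order `Ξ`. -/
theorem faithful_decomposition_remove_duplicate_column
    (d t : ℕ) (ht : 1 ≤ t) (D : Matrix (Fin d) (Fin (t + 1)) ℤ)
    (hdup : ∀ j, D j ⟨t - 1, by omega⟩ = D j ⟨t, by omega⟩)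
    (D' : Matrix (Fin d) (Fin t) ℤ)
    (hcols : ∀ j (i : Fin t), D' j i = D j i.castSucc)
    (Ξ : ℤ) (b : Fin d → ℤ) (L : Multiset (Fin d → ℤ))
    (hL : FaithfulDecomp D' Ξ b L) :
    FaithfulDecomp D Ξ b L := by
  have hD : D = D'.submatrix id (fun i : Fin (t + 1) => ⟨min i (t - 1), by omega⟩) := by
    ext j i
    rcases Fin.eq_castSucc_or_eq_last i with ⟨i, rfl⟩ | rfl
    · simp [hcols, Nat.min_eq_left (Nat.le_sub_one_of_lt i.isLt)]
    · simp [hcols, hdup, Fin.last]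
  rw [hD]
  exact hL.submatrix _
end

section
/- Let d ≥ 1 and Φ ≥ 1 be integers. Let F ⊆ ℝ^d be a nonempty set such that for every invertible matrix V̄ ∈ ℤ^{d×d} with all entries of absolute value at most Φ and every index i ∈ {1, …, d}, the sign (negative, zero, or positive) of the i-th coordinate of V̄^{-1}x is the same for all x ∈ F. Let P ⊆ box(d, Φ) be a finite set with F ⊆ cone(P). Then there exists a linearly independent subset V ⊆ P with F ⊆ cone(V). -/
/-!
Fix `x₀ ∈ F`. Conic Carathéodory gives a linearly independent `T ⊆ P` with `x₀ ∈ cone T`;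
completing `T` by unit vectors yields a basis whose columns form an invertible integer matrix `V̄`
with entries in `[-Φ, Φ]`. Membership of `x` in `cone T` says exactly that the coordinates
`V̄⁻¹ x` are nonnegative and vanish off `T`, which depends only on their signs, and by hypothesis
these signs are the same for every `x ∈ F` as for `x₀`.
-/

/-- The cone generated by a finite set of integer vectors, viewed in `ℝᵈ`. -/
def coneZ {d : ℕ} (P : Finset (Fin d → ℤ)) : Set (Fin d → ℝ) :=
  {x | ∃ lam : (Fin d → ℤ) → ℝ, (∀ v, 0 ≤ lam v) ∧
    x = ∑ v ∈ P, lam v • fun j => ((v j : ℤ) : ℝ)}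

open Finset Matrix

section FinCone

variable {𝕜 E ι κ : Type*}

section OrderedSemiring

variable [Semiring 𝕜] [PartialOrder 𝕜] [AddCommMonoid E] [Module 𝕜 E]

variable (𝕜) in
def finCone (f : ι → E) (s : Finset ι) : Set E :=
  {x | ∃ c : ι → 𝕜, (∀ i, 0 ≤ c i) ∧ x = ∑ i ∈ s, c i • f i}

theorem finCone_image [DecidableEq ι] (f : ι → E) {w : κ → ι} (hw : Function.Injective w)
    (s : Finset κ) : finCone 𝕜 f (s.image w) = finCone 𝕜 (f ∘ w) s := by
  ext x
  simp only [finCone, Set.mem_ofPred_eq, sum_image hw.injOn, Function.comp_apply]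
  constructor
  · rintro ⟨c, hc, rfl⟩
    exact ⟨c ∘ w, fun k => hc (w k), rfl⟩
  · rintro ⟨c, hc, rfl⟩
    refine ⟨Function.extend w c 0, fun i => ?_, by simp [hw.extend_apply]⟩
    by_cases hi : ∃ k, w k = i
    · obtain ⟨k, rfl⟩ := hi
      simpa [hw.extend_apply] using hc k
    · simp [Function.extend_apply' _ _ _ hi]

theorem mem_finCone_iff_exists_support [Fintype ι] [DecidableEq ι] {f : ι → E} {s : Finset ι}
    {x : E} : x ∈ finCone 𝕜 f s ↔
      ∃ c : ι → 𝕜, (∀ i, 0 ≤ c i) ∧ (∀ i ∉ s, c i = 0) ∧ x = ∑ i, c i • f i := by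
  constructor
  · rintro ⟨c, hc, rfl⟩
    refine ⟨fun i => if i ∈ s then c i else 0, fun i => ?_, fun i hi => if_neg hi, ?_⟩
    · dsimp only
      split_ifs
      exacts [hc i, le_rfl]
    · simp [ite_smul]
  · rintro ⟨c, hc, hs, rfl⟩
    refine ⟨c, hc, (sum_subset (subset_univ s) fun i _ hi => ?_).symm⟩
    rw [hs i hi, zero_smul]

end OrderedSemiring

theorem Matrix.mem_finCone_col_iff [CommRing 𝕜] [PartialOrder 𝕜] [Fintype κ] [DecidableEq κ]
    {M : Matrix κ κ 𝕜} (hM : IsUnit M) {s : Finset κ} {x : κ → 𝕜} :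
    x ∈ finCone 𝕜 M.col s ↔ (∀ k, 0 ≤ (M⁻¹ *ᵥ x) k) ∧ ∀ k ∉ s, (M⁻¹ *ᵥ x) k = 0 := by
  have hdet := (M.isUnit_iff_isUnit_det).1 hM
  have hsum : ∀ c, ∑ k, c k • M.col k = M *ᵥ c := fun c => by
    simp [mulVec_eq_sum, col]
  simp only [mem_finCone_iff_exists_support, hsum]
  constructor
  · rintro ⟨c, hc, hs, rfl⟩
    rw [mulVec_mulVec, nonsing_inv_mul M hdet, one_mulVec]
    exact ⟨hc, hs⟩
  · rintro ⟨hnonneg, hs⟩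
    exact ⟨_, hnonneg, hs, by rw [mulVec_mulVec, mul_nonsing_inv M hdet, one_mulVec]⟩

section OrderedField

variable [Field 𝕜] [LinearOrder 𝕜] [IsStrictOrderedRing 𝕜] [AddCommGroup E] [Module 𝕜 E]

/-- The ratio test: move along the dependence `g` until the first coefficient hits zero. -/
theorem exists_mem_finCone_erase [DecidableEq ι] {f : ι → E} {s : Finset ι} {x : E}
    (hx : x ∈ finCone 𝕜 f s) {g : ι → 𝕜} (hg : ∑ i ∈ s, g i • f i = 0)
    (hpos : ∃ i ∈ s, 0 < g i) : ∃ i ∈ s, x ∈ finCone 𝕜 f (s.erase i) := by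
  obtain ⟨c, hc, rfl⟩ := hx
  obtain ⟨i₀, hi₀, hmin⟩ := (s.filter (0 < g ·)).exists_min_image (fun i => c i / g i)
    (filter_nonempty_iff.2 hpos)
  rw [mem_filter] at hi₀
  set t := c i₀ / g i₀
  have ht : 0 ≤ t := div_nonneg (hc i₀) hi₀.2.le
  have hle : ∀ i ∈ s, t * g i ≤ c i := by
    intro i hi
    rcases le_or_gt (g i) 0 with hgi | hgi
    · exact (mul_nonpos_of_nonneg_of_nonpos ht hgi).trans (hc i)
    · exact (le_div_iff₀ hgi).1 (hmin i (mem_filter.2 ⟨hi, hgi⟩))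
  have hi₀_zero : c i₀ - t * g i₀ = 0 := by rw [div_mul_cancel₀ _ hi₀.2.ne', sub_self]
  refine ⟨i₀, hi₀.1, fun i => if i ∈ s then c i - t * g i else 0, fun i => ?_, ?_⟩
  · dsimp only
    split_ifs with hi
    · exact sub_nonneg.2 (hle i hi)
    · exact le_rfl
  · rw [sum_erase _ (by simp [hi₀.1, hi₀_zero])]
    simp only [ite_smul, zero_smul, sum_ite_mem, inter_self, sub_smul, mul_smul, sum_sub_distrib,
      ← smul_sum, hg, smul_zero, sub_zero]

theorem exists_linearIndepOn_subset_of_mem_finCone [DecidableEq ι] {f : ι → E} {s : Finset ι}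
    {x : E} (hx : x ∈ finCone 𝕜 f s) :
    ∃ t ⊆ s, LinearIndepOn 𝕜 f (t : Set ι) ∧ x ∈ finCone 𝕜 f t := by
  induction s using Finset.strongInduction with
  | H s ih =>
  by_cases hli : LinearIndepOn 𝕜 f (s : Set ι)
  · exact ⟨s, subset_rfl, hli, hx⟩
  obtain ⟨g, hg, i, hi, hgi⟩ := not_linearIndepOn_finset_iff.1 hli
  have hdep : ∃ g : ι → 𝕜, ∑ i ∈ s, g i • f i = 0 ∧ ∃ i ∈ s, 0 < g i := by
    rcases hgi.lt_or_gt with hneg | hpos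
    · exact ⟨-g, by simp [neg_smul, hg], i, hi, neg_pos.2 hneg⟩
    · exact ⟨g, hg, i, hi, hpos⟩
  obtain ⟨g', hg', hpos⟩ := hdep
  obtain ⟨j, hj, hxj⟩ := exists_mem_finCone_erase hx hg' hpos
  obtain ⟨t, hts, ht⟩ := ih _ (erase_ssubset hj) hxj
  exact ⟨t, hts.trans (erase_subset _ _), ht⟩

end OrderedField

end FinCone

theorem exists_linearIndependent_comp_of_span_eq_top {K V α ι : Type*} [DivisionRing K]
    [AddCommGroup V] [Module K V] (b : Module.Basis ι K V) {v : α → V} {s t : Set α}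
    (hs : LinearIndepOn K v s) (hst : s ⊆ t) (ht : Submodule.span K (v '' t) = ⊤) :
    ∃ w : ι → α, LinearIndependent K (v ∘ w) ∧ s ⊆ Set.range w ∧ Set.range w ⊆ t := by
  obtain ⟨u, hut, hsu, htu, hu⟩ := exists_linearIndepOn_extension hs hst
  have hspan : ⊤ ≤ Submodule.span K (Set.range fun x : u => v x) := by
    rw [← ht, ← Set.image_eq_range]
    exact Submodule.span_le.2 htu
  let e := b.indexEquiv (Module.Basis.mk hu hspan)
  refine ⟨fun i => e i, hu.comp _ e.injective, fun a ha => ⟨e.symm ⟨a, hsu ha⟩, by simp⟩, ?_⟩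
  rintro _ ⟨i, rfl⟩
  exact hut (e i).2

theorem nonneg_and_eq_zero_off_of_sign_eq {κ α : Type*} [Zero α] [LinearOrder α] {a b : κ → α}
    (hab : ∀ k, SignType.sign (a k) = SignType.sign (b k)) {s : Finset κ}
    (hb : (∀ k, 0 ≤ b k) ∧ ∀ k ∉ s, b k = 0) : (∀ k, 0 ≤ a k) ∧ ∀ k ∉ s, a k = 0 := by
  refine ⟨fun k => sign_nonneg_iff.1 ?_, fun k hk => sign_eq_zero_iff.1 ?_⟩
  · rw [hab k]
    exact sign_nonneg_iff.2 (hb.1 k)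
  · rw [hab k, hb.2 k hk, sign_zero]

def castVec {d : ℕ} (v : Fin d → ℤ) : Fin d → ℝ := fun j => v j

theorem coneZ_eq_finCone {d : ℕ} (P : Finset (Fin d → ℤ)) : coneZ P = finCone ℝ castVec P := rfl

theorem exists_linearIndependent_extension_in_box {d Φ : ℕ} (hΦ : 1 ≤ Φ) {T : Finset (Fin d → ℤ)}
    (hT : LinearIndepOn ℝ castVec (↑T : Set (Fin d → ℤ))) (hTΦ : ∀ p ∈ T, ∀ j, |p j| ≤ (Φ : ℤ)) :
    ∃ w : Fin d → Fin d → ℤ, LinearIndependent ℝ (castVec ∘ w) ∧ ↑T ⊆ Set.range w ∧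
      ∀ k j, |w k j| ≤ (Φ : ℤ) := by
  have hspan : Submodule.span ℝ
      (castVec '' ((T : Set (Fin d → ℤ)) ∪ Set.range fun i => Pi.single i 1)) = ⊤ := by
    refine eq_top_iff.2 ((Pi.basisFun ℝ (Fin d)).span_eq.ge.trans (Submodule.span_mono ?_))
    rintro _ ⟨i, rfl⟩
    refine ⟨Pi.single i 1, Or.inr ⟨i, rfl⟩, funext fun j => ?_⟩
    simp [castVec, Pi.single_apply, apply_ite]
  obtain ⟨w, hw, hTw, hwt⟩ := exists_linearIndependent_comp_of_span_eq_top
    (Pi.basisFun ℝ (Fin d)) hT Set.subset_union_left hspan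
  refine ⟨w, hw, hTw, fun k j => ?_⟩
  rcases hwt ⟨k, rfl⟩ with hk | ⟨i, hi⟩
  · exact hTΦ _ hk j
  · rw [← hi]
    simp only [Pi.single_apply]
    split_ifs <;> simp [hΦ]

theorem linearly_independent_generators_general
    (d Φ : ℕ) (hΦ : 1 ≤ Φ)
    (F : Set (Fin d → ℝ)) (hne : F.Nonempty)
    (hsign : ∀ Vbar : Matrix (Fin d) (Fin d) ℤ, Vbar.det ≠ 0 →
      (∀ i j, |Vbar i j| ≤ (Φ : ℤ)) →
      ∀ i : Fin d, ∃ s : SignType, ∀ x ∈ F,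
        SignType.sign (((Vbar.map (Int.cast : ℤ → ℝ))⁻¹).mulVec x i) = s)
    (P : Finset (Fin d → ℤ)) (hP : ∀ p ∈ P, ∀ j, |p j| ≤ (Φ : ℤ))
    (hFP : F ⊆ coneZ P) :
    ∃ V ⊆ P, LinearIndependent ℝ (fun v : V => fun j => ((v.1 j : ℤ) : ℝ)) ∧
      F ⊆ coneZ V := by
  classical
  obtain ⟨x₀, hx₀⟩ := hne
  obtain ⟨T, hTP, hT, hx₀T⟩ := exists_linearIndepOn_subset_of_mem_finCone (hFP hx₀)
  obtain ⟨w, hw, hTw, hwΦ⟩ :=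
    exists_linearIndependent_extension_in_box hΦ hT fun p hp => hP p (hTP hp)
  set Vbar : Matrix (Fin d) (Fin d) ℤ := Matrix.of fun i k => w k i
  set M := Vbar.map (Int.cast : ℤ → ℝ)
  have hM : IsUnit M := linearIndependent_cols_iff_isUnit.1 hw
  have hdet : Vbar.det ≠ 0 := fun h => by
    simpa [M, ← Int.cast_det, h] using (M.isUnit_iff_isUnit_det.1 hM).ne_zero
  set K := T.preimage w hw.injective.of_comp.injOn
  have hTK : K.image w = T := by
    rw [image_preimage, filter_true_of_mem fun v hv => hTw hv]
  have hcone : ∀ x, x ∈ coneZ T ↔ (∀ k, 0 ≤ (M⁻¹ *ᵥ x) k) ∧ ∀ k ∉ K, (M⁻¹ *ᵥ x) k = 0 := by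
    intro x
    rw [coneZ_eq_finCone, ← hTK, finCone_image _ hw.injective.of_comp]
    exact M.mem_finCone_col_iff hM
  refine ⟨T, hTP, hT, fun y hy => (hcone y).2 ?_⟩
  have hsame : ∀ k, SignType.sign ((M⁻¹ *ᵥ y) k) = SignType.sign ((M⁻¹ *ᵥ x₀) k) := fun k => by
    obtain ⟨s, hs⟩ := hsign Vbar hdet (fun i k => hwΦ k i) k
    rw [hs y hy, hs x₀ hx₀]
  exact nonneg_and_eq_zero_off_of_sign_eq hsame ((hcone x₀).1 hx₀T)

/-- Let `F ⊆ ℝᵈ` be nonempty such that for every invertible `V̄ ∈ ℤ^{d×d}` with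
entries of absolute value at most `Φ` and every coordinate `i`, the sign of
`(V̄⁻¹ x)ᵢ` is the same for all `x ∈ F`.  If `P ⊆ box(d, Φ)` is finite with
`F ⊆ cone(P)`, then some linearly independent subset `V ⊆ P` satisfies
`F ⊆ cone(V)`. -/
theorem linearly_independent_generators
    (d Φ : ℕ) (hd : 1 ≤ d) (hΦ : 1 ≤ Φ)
    (F : Set (Fin d → ℝ)) (hne : F.Nonempty)
    (hsign : ∀ Vbar : Matrix (Fin d) (Fin d) ℤ, Vbar.det ≠ 0 →
      (∀ i j, |Vbar i j| ≤ (Φ : ℤ)) →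
      ∀ i : Fin d, ∃ s : SignType, ∀ x ∈ F,
        SignType.sign (((Vbar.map (Int.cast : ℤ → ℝ))⁻¹).mulVec x i) = s)
    (P : Finset (Fin d → ℤ)) (hP : ∀ p ∈ P, ∀ j, |p j| ≤ (Φ : ℤ))
    (hFP : F ⊆ coneZ P) :
    ∃ V ⊆ P, LinearIndependent ℝ (fun v : V => fun j => ((v.1 j : ℤ) : ℝ)) ∧
      F ⊆ coneZ V :=
  linearly_independent_generators_general d Φ hΦ F hne hsign P hP hFP
end

section
/- Let d ≥ 1, Φ ≥ 1, t ≥ 1, and Ψ ≥ 1 be integers, and let V ∈ ℤ^{d×d} be invertible with all entries of absolute value at most Φ. Set L = lcm{1, 2, …, ⌊Φ^d · d^{d/2}⌋} and M = t·Ψ·L. Then L·V^{-1} is an integer matrix, and for all b, r ∈ ℤ^d with b ≡ r (mod M) coordinatewise, the vector (Ψ·V)^{-1}(b − r) lies in t·ℤ^d. -/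
/-!
Hadamard's inequality bounds `|det V|` by `Φᵈ d^{d/2}`, so the nonzero integer `det V` divides
`L` and `L V⁻¹ = (L / det V) · adj V` is an integer matrix. Writing `b - r = M c`, one gets
`(Ψ V)⁻¹ (b - r) = t · (L V⁻¹) c ∈ t ℤᵈ`.
-/

open Matrix

theorem Matrix.abs_det_le_prod_sqrt_sum_sq {d : ℕ} (A : Matrix (Fin d) (Fin d) ℝ) :
    |A.det| ≤ ∏ i, √(∑ j, A i j ^ 2) := by
  have : Fact (Module.finrank ℝ (EuclideanSpace ℝ (Fin d)) = d) :=
    ⟨finrank_euclideanSpace_fin⟩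
  let b := EuclideanSpace.basisFun (Fin d) ℝ
  let rows : Fin d → EuclideanSpace ℝ (Fin d) := fun i => WithLp.toLp 2 (A i)
  have hdet : b.toBasis.det rows = A.det := by
    rw [Module.Basis.det_apply, ← det_transpose]
    rfl
  have hnorm : ∀ i, ‖rows i‖ = √(∑ j, A i j ^ 2) := fun i => by
    simp [rows, EuclideanSpace.norm_eq]
  rw [← hdet, ← b.toBasis.orientation.volumeForm_robust' b rows]
  simpa only [hnorm] using b.toBasis.orientation.abs_volumeForm_apply_le rows

theorem Matrix.abs_det_le_of_abs_le {d : ℕ} (A : Matrix (Fin d) (Fin d) ℝ) {Φ : ℝ}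
    (hA : ∀ i j, |A i j| ≤ Φ) : |A.det| ≤ Φ ^ d * (d : ℝ) ^ ((d : ℝ) / 2) := by
  have hrow : ∀ i, √(∑ j, A i j ^ 2) ≤ Φ * √d := fun i => by
    have hΦ : 0 ≤ Φ := (abs_nonneg _).trans (hA i i)
    have hsum : ∑ j, A i j ^ 2 ≤ d * Φ ^ 2 := by
      calc ∑ j, A i j ^ 2 ≤ ∑ _j : Fin d, Φ ^ 2 :=
            Finset.sum_le_sum fun j _ => sq_le_sq' (abs_le.1 (hA i j)).1 (abs_le.1 (hA i j)).2
        _ = d * Φ ^ 2 := by simp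
    calc √(∑ j, A i j ^ 2) ≤ √(d * Φ ^ 2) := Real.sqrt_le_sqrt hsum
      _ = Φ * √d := by rw [Real.sqrt_mul (Nat.cast_nonneg d), Real.sqrt_sq hΦ, mul_comm]
  calc |A.det| ≤ ∏ i, √(∑ j, A i j ^ 2) := A.abs_det_le_prod_sqrt_sum_sq
    _ ≤ ∏ _i : Fin d, Φ * √d :=
      Finset.prod_le_prod (fun _ _ => Real.sqrt_nonneg _) fun i _ => hrow i
    _ = Φ ^ d * (d : ℝ) ^ ((d : ℝ) / 2) := by
      rw [Finset.prod_const, Finset.card_univ, Fintype.card_fin, mul_pow, Real.sqrt_eq_rpow,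
        ← Real.rpow_mul_natCast (Nat.cast_nonneg d)]
      ring_nf

theorem Nat.dvd_lcm_Icc {n N : ℕ} (hn : n ≠ 0) (hnN : n ≤ N) :
    n ∣ (Finset.Icc 1 N).lcm id :=
  Finset.dvd_lcm (Finset.mem_Icc.2 ⟨Nat.one_le_iff_ne_zero.2 hn, hnN⟩)

theorem Matrix.det_smul_inv_map_intCast {n K : Type*} [Fintype n] [DecidableEq n] [Field K]
    (V : Matrix n n ℤ) (hV : (V.det : K) ≠ 0) :
    (V.det : K) • (V.map (Int.cast : ℤ → K))⁻¹ = V.adjugate.map Int.cast := by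
  have hdet : (V.map (Int.cast : ℤ → K)).det = V.det := ((Int.castRingHom K).map_det V).symm
  have hadj : (V.map (Int.cast : ℤ → K)).adjugate = V.adjugate.map Int.cast :=
    ((Int.castRingHom K).map_adjugate V).symm
  rw [inv_def, hdet, hadj, Ring.inverse_eq_inv', smul_smul, mul_inv_cancel₀ hV, one_smul]

theorem Matrix.inv_smul_mulVec_smul {n K : Type*} [Fintype n] [DecidableEq n] [Field K]
    (A : Matrix n n K) (hA : IsUnit A.det) {a : K} (ha : a ≠ 0) (v : n → K) :
    (a • A)⁻¹ *ᵥ (a • v) = A⁻¹ *ᵥ v := by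
  let := invertibleOfNonzero ha
  rw [A.inv_smul a hA, smul_mulVec, mulVec_smul, smul_smul, invOf_mul_self, one_smul]

theorem scaled_inverse_integrality_general
    (d Φ t Ψ : ℕ) (hΨ : 1 ≤ Ψ)
    (V : Matrix (Fin d) (Fin d) ℤ) (hV : V.det ≠ 0)
    (hVbound : ∀ i j, |V i j| ≤ (Φ : ℤ))
    (L M : ℕ)
    (hL : L = (Finset.Icc 1 (Nat.floor ((Φ : ℝ) ^ d * (d : ℝ) ^ ((d : ℝ) / 2)))).lcm id)
    (hM : M = t * Ψ * L) :
    (∃ W : Matrix (Fin d) (Fin d) ℤ,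
      (L : ℝ) • (V.map (Int.cast : ℤ → ℝ))⁻¹ = W.map (Int.cast : ℤ → ℝ)) ∧
    ∀ b r : Fin d → ℤ, (∀ j, (M : ℤ) ∣ b j - r j) →
      ∀ j : Fin d, ∃ z : ℤ,
        (((Ψ : ℝ) • V.map (Int.cast : ℤ → ℝ))⁻¹).mulVec
          (fun i => ((b i - r i : ℤ) : ℝ)) j = (t : ℝ) * (z : ℝ) := by
  set Vr := V.map (Int.cast : ℤ → ℝ)
  have hdetR : (V.det : ℝ) ≠ 0 := Int.cast_ne_zero.2 hV
  have hdet : Vr.det = V.det := ((Int.castRingHom ℝ).map_det V).symm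
  have hVr : IsUnit Vr.det := hdet ▸ hdetR.isUnit
  have hdet_le : V.det.natAbs ≤ ⌊(Φ : ℝ) ^ d * (d : ℝ) ^ ((d : ℝ) / 2)⌋₊ := by
    refine Nat.le_floor ?_
    rw [Nat.cast_natAbs, Int.cast_abs, ← hdet]
    exact Vr.abs_det_le_of_abs_le fun i j => by
      simp only [Vr, map_apply]; exact_mod_cast hVbound i j
  obtain ⟨k, hk⟩ : V.det ∣ L := by
    rw [hL]
    exact Int.natAbs_dvd.1 <| Int.natCast_dvd_natCast.2 <|
      Nat.dvd_lcm_Icc (Int.natAbs_ne_zero.2 hV) hdet_le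
  set W := k • V.adjugate
  have hW : (L : ℝ) • Vr⁻¹ = W.map Int.cast := by
    rw [show (L : ℝ) = k * V.det by exact_mod_cast hk.trans (mul_comm _ _), mul_smul,
      V.det_smul_inv_map_intCast hdetR]
    ext i j
    simp only [W, map_apply, Matrix.smul_apply, smul_eq_mul, Int.cast_mul]
  refine ⟨⟨W, hW⟩, fun b r hbr j => ?_⟩
  choose c hc using hbr
  refine ⟨(W *ᵥ c) j, ?_⟩
  have hdiff : (fun i => ((b i - r i : ℤ) : ℝ)) =
      (Ψ : ℝ) • (t : ℝ) • (L : ℝ) • fun i => (c i : ℝ) := by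
    ext i
    simp only [hc i, hM, Nat.cast_mul, Int.cast_mul, Int.cast_natCast, Pi.smul_apply,
      smul_eq_mul]
    ring
  rw [hdiff, Vr.inv_smul_mulVec_smul hVr
    (Nat.cast_ne_zero.2 (Nat.one_le_iff_ne_zero.1 hΨ)), mulVec_smul, mulVec_smul,
    ← smul_mulVec (L : ℝ), hW, Pi.smul_apply, smul_eq_mul]
  exact congrArg _ ((Int.castRingHom ℝ).map_mulVec W c j).symm

/-- Let `V ∈ ℤ^{d×d}` be invertible with entries of absolute value at most `Φ`, let
`L = lcm{1, …, ⌊Φᵈ · d^{d/2}⌋}` and `M = t·Ψ·L`.  Then `L·V⁻¹` is an integer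
matrix, and whenever `b ≡ r (mod M)` coordinatewise, the vector `(Ψ·V)⁻¹(b − r)`
lies in `t·ℤᵈ`. -/
theorem scaled_inverse_integrality
    (d Φ t Ψ : ℕ) (hd : 1 ≤ d) (hΦ : 1 ≤ Φ) (ht : 1 ≤ t) (hΨ : 1 ≤ Ψ)
    (V : Matrix (Fin d) (Fin d) ℤ) (hV : V.det ≠ 0)
    (hVbound : ∀ i j, |V i j| ≤ (Φ : ℤ))
    (L M : ℕ)
    (hL : L = (Finset.Icc 1 (Nat.floor ((Φ : ℝ) ^ d * (d : ℝ) ^ ((d : ℝ) / 2)))).lcm id)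
    (hM : M = t * Ψ * L) :
    (∃ W : Matrix (Fin d) (Fin d) ℤ,
      (L : ℝ) • (V.map (Int.cast : ℤ → ℝ))⁻¹ = W.map (Int.cast : ℤ → ℝ)) ∧
    ∀ b r : Fin d → ℤ, (∀ j, (M : ℤ) ∣ b j - r j) →
      ∀ j : Fin d, ∃ z : ℤ,
        (((Ψ : ℝ) • V.map (Int.cast : ℤ → ℝ))⁻¹).mulVec
          (fun i => ((b i - r i : ℤ) : ℝ)) j = (t : ℝ) * (z : ℝ) :=
  scaled_inverse_integrality_general d Φ t Ψ hΨ V hV hVbound L M hL hM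
end

section
/- Let d ≥ 1 and Δ ≥ 1 be integers, let b ∈ ℝ^d, let w_1, …, w_ℓ ∈ ℝ^d, and let λ_1, …, λ_ℓ be strictly positive reals with b = Σ_{i=1}^ℓ λ_i w_i. Assume that for every invertible matrix U' ∈ ℤ^{d×d} with all entries of absolute value at most Δ such that b ∈ cone(U'), every w_i (i ∈ {1, …, ℓ}) lies in cone(U'). Then for every invertible matrix U ∈ ℤ^{d×d} with all entries of absolute value at most Δ and every strictly positive reals ν_1, …, ν_ℓ such that Σ_{i=1}^ℓ ν_i w_i ∈ cone(U), it holds that b ∈ cone(U). -/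
/-- The cone generated by the columns of the integer matrix `U`, viewed in `ℝᵈ`. -/
def coneM {d : ℕ} (U : Matrix (Fin d) (Fin d) ℤ) : Set (Fin d → ℝ) :=
  {x | ∃ lam : Fin d → ℝ, (∀ i, 0 ≤ lam i) ∧ x = ∑ i, lam i • fun j => ((U j i : ℤ) : ℝ)}

open Matrix

lemma mem_coneM_iff {d : ℕ} (U : Matrix (Fin d) (Fin d) ℤ) (h : U.det ≠ 0)
    (x : Fin d → ℝ) :
    x ∈ coneM U ↔ ∀ j, 0 ≤ ((U.map (Int.cast : ℤ → ℝ))⁻¹ *ᵥ x) j := by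
  set R := U.map (Int.cast : ℤ → ℝ) with hR
  have hdet : IsUnit R.det := by
    have : R.det = ((U.det : ℤ) : ℝ) := by
      rw [hR]; exact (RingHom.map_det (Int.castRingHom ℝ) U).symm
    rw [this]
    exact isUnit_iff_ne_zero.mpr (by exact_mod_cast h)
  have key : ∀ lam : Fin d → ℝ,
      (∑ i, lam i • fun j => ((U j i : ℤ) : ℝ)) = R *ᵥ lam := by
    intro lam
    funext j
    simp only [Finset.sum_apply, Pi.smul_apply, smul_eq_mul, mulVec, dotProduct,
      hR, Matrix.map_apply]
    exact Finset.sum_congr rfl fun i _ => mul_comm _ _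
  constructor
  · rintro ⟨lam, hlam, rfl⟩ j
    rw [key, mulVec_mulVec, nonsing_inv_mul R hdet, one_mulVec]
    exact hlam j
  · intro hx
    refine ⟨R⁻¹ *ᵥ x, hx, ?_⟩
    rw [key, mulVec_mulVec, mul_nonsing_inv R hdet, one_mulVec]

/-- Let `b = Σᵢ λᵢ wᵢ` with all `λᵢ > 0`.  Assume that for every invertible
`U' ∈ ℤ^{d×d}` with entries bounded by `Δ` and `b ∈ cone(U')`, all the `wᵢ` lie in
`cone(U')`.  Then for every invertible `U ∈ ℤ^{d×d}` with entries bounded by `Δ`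
and all strictly positive reals `νᵢ` with `Σᵢ νᵢ wᵢ ∈ cone(U)`, also
`b ∈ cone(U)`. -/
theorem stay_in_the_cone
    (d Δ ℓ : ℕ) (hd : 1 ≤ d) (hΔ : 1 ≤ Δ)
    (b : Fin d → ℝ) (w : Fin ℓ → (Fin d → ℝ)) (lam : Fin ℓ → ℝ)
    (hlam : ∀ i, 0 < lam i) (hb : b = ∑ i, lam i • w i)
    (hcone : ∀ U' : Matrix (Fin d) (Fin d) ℤ, U'.det ≠ 0 →
      (∀ i j, |U' i j| ≤ (Δ : ℤ)) → b ∈ coneM U' → ∀ i, w i ∈ coneM U') :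
    ∀ U : Matrix (Fin d) (Fin d) ℤ, U.det ≠ 0 → (∀ i j, |U i j| ≤ (Δ : ℤ)) →
      ∀ ν : Fin ℓ → ℝ, (∀ i, 0 < ν i) → (∑ i, ν i • w i) ∈ coneM U →
        b ∈ coneM U := by
  intro U hdet hbound ν hν hsum
  set R := U.map (Int.cast : ℤ → ℝ) with hRdef
  set c : Fin d → ℝ := R⁻¹ *ᵥ b with hc
  -- sign vector
  set ε : Fin d → ℤ := fun j => if c j < 0 then -1 else 1 with hε
  have hε1 : ∀ j, ε j = -1 ∨ ε j = 1 := by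
    intro j; by_cases h : c j < 0 <;> simp [hε, h]
  -- flipped matrix
  set U' : Matrix (Fin d) (Fin d) ℤ := U * diagonal ε with hU'
  have hdet' : U'.det ≠ 0 := by
    rw [hU', det_mul, det_diagonal]
    refine mul_ne_zero hdet (Finset.prod_ne_zero_iff.mpr fun j _ => ?_)
    rcases hε1 j with h | h <;> simp [h]
  have hbound' : ∀ i j, |U' i j| ≤ (Δ : ℤ) := by
    intro i j
    have : U' i j = U i j * ε j := by
      simp [hU', mul_apply, diagonal, Finset.sum_ite_eq]
    rw [this, abs_mul]
    rcases hε1 j with h | h <;> simp [h] <;> exact hbound i j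
  -- the real versions
  have hRdet : IsUnit R.det := by
    have : R.det = ((U.det : ℤ) : ℝ) := (RingHom.map_det (Int.castRingHom ℝ) U).symm
    rw [this]; exact isUnit_iff_ne_zero.mpr (by exact_mod_cast hdet)
  set D : Matrix (Fin d) (Fin d) ℝ := diagonal (fun j => ((ε j : ℤ) : ℝ)) with hD
  have hDD : D * D = 1 := by
    rw [hD, diagonal_mul_diagonal]
    convert diagonal_one using 2
    funext j
    rcases hε1 j with h | h <;> simp [h]
  have hR' : U'.map (Int.cast : ℤ → ℝ) = R * D := by
    rw [hU']
    ext i j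
    simp [Matrix.map_apply, mul_apply, diagonal, hD, apply_ite (Int.cast : ℤ → ℝ),
      apply_ite (fun r : ℝ => R i j * r), hRdef]
  have hinv' : (U'.map (Int.cast : ℤ → ℝ))⁻¹ = D * R⁻¹ := by
    rw [hR', Matrix.mul_inv_rev]
    congr 1
    exact inv_eq_right_inv hDD
  have hmv : ∀ x : Fin d → ℝ, ∀ j,
      ((U'.map (Int.cast : ℤ → ℝ))⁻¹ *ᵥ x) j = ((ε j : ℤ) : ℝ) * ((R⁻¹ *ᵥ x) j) := by
    intro x j
    rw [hinv', ← mulVec_mulVec, hD, mulVec_diagonal]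
  -- b ∈ coneM U'
  have hbU' : b ∈ coneM U' := by
    rw [mem_coneM_iff U' hdet']
    intro j
    rw [hmv]
    rcases lt_or_ge (c j) 0 with h | h
    · have : ε j = -1 := by simp [hε, h]
      rw [this]
      push_cast
      nlinarith [h]
    · have : ε j = 1 := by simp [hε, not_lt.mpr h]
      rw [this]
      simpa using h
  have hwU' : ∀ i, w i ∈ coneM U' := hcone U' hdet' hbound' hbU'
  -- translate: for all i j, 0 ≤ ε j * (R⁻¹ w i) j
  have hw : ∀ i j, 0 ≤ ((ε j : ℤ) : ℝ) * ((R⁻¹ *ᵥ w i) j) := by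
    intro i j
    have := (mem_coneM_iff U' hdet' (w i)).mp (hwU' i) j
    rwa [hmv] at this
  -- linearity of R⁻¹ *ᵥ on sums
  have hlin : ∀ (μ : Fin ℓ → ℝ), R⁻¹ *ᵥ (∑ i, μ i • w i) = ∑ i, μ i • (R⁻¹ *ᵥ w i) := by
    intro μ
    have : R⁻¹ *ᵥ (∑ i, μ i • w i) = R⁻¹.mulVecLin (∑ i, μ i • w i) := rfl
    rw [this, map_sum]
    simp [Matrix.mulVecLin_apply]
  -- key: c j ≥ 0 for all j
  have hcpos : ∀ j, 0 ≤ c j := by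
    intro j
    by_contra hneg
    push_neg at hneg
    have hεj : ε j = -1 := by simp [hε, hneg]
    -- each (R⁻¹ w i) j ≤ 0
    have hwle : ∀ i, (R⁻¹ *ᵥ w i) j ≤ 0 := by
      intro i
      have := hw i j
      rw [hεj] at this
      push_cast at this
      linarith
    -- sum condition from hsum
    have hs : 0 ≤ (R⁻¹ *ᵥ (∑ i, ν i • w i)) j :=
      (mem_coneM_iff U hdet _).mp hsum j
    rw [hlin] at hs
    simp only [Finset.sum_apply, Pi.smul_apply, smul_eq_mul] at hs
    have hterm : ∀ i ∈ Finset.univ, ν i * (R⁻¹ *ᵥ w i) j ≤ 0 := fun i _ =>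
      mul_nonpos_of_nonneg_of_nonpos (hν i).le (hwle i)
    have hzero : ∀ i, ν i * (R⁻¹ *ᵥ w i) j = 0 := by
      intro i
      have hsum0 : (∑ i, ν i * (R⁻¹ *ᵥ w i) j) = 0 :=
        le_antisymm (Finset.sum_nonpos hterm) hs
      exact (Finset.sum_eq_zero_iff_of_nonpos hterm).mp hsum0 i (Finset.mem_univ i)
    have hwzero : ∀ i, (R⁻¹ *ᵥ w i) j = 0 := by
      intro i
      have := hzero i
      exact (mul_eq_zero.mp this).resolve_left (hν i).ne'
    have : c j = 0 := by
      rw [hc, hb, hlin]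
      simp [hwzero]
    linarith
  rw [mem_coneM_iff U hdet]
  exact hcpos
end

section
/- Let d, t ≥ 1 be integers and let D ∈ ℤ^{d×t} have rank d. Let p ∈ ℤ^d, let w_1, …, w_ℓ ∈ ℤ^d, let ν_1, …, ν_ℓ be strictly positive reals with p = Σ_{i=1}^ℓ ν_i w_i, and let i* be an index with ν_{i*} ≥ t + 1. Suppose that for every set U of d linearly independent columns of D with p ∈ cone(U), every w_i (i ∈ {1, …, ℓ}) lies in intcone(U). Then for every x ∈ ℤ_{≥0}^t with Dx = p there exists y ∈ ℤ_{≥0}^t with y ≤ x componentwise and Dy = w_{i*} (and hence x − y ∈ ℤ_{≥0}^t satisfies D(x − y) = p − w_{i*}). -/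
/-- The cone generated by a finite family of integer vectors, viewed in `ℝᵈ`. -/
def coneCols {d : ℕ} (cols : Fin d → (Fin d → ℤ)) : Set (Fin d → ℝ) :=
  {x | ∃ lam : Fin d → ℝ, (∀ k, 0 ≤ lam k) ∧ x = ∑ k, lam k • fun j => ((cols k j : ℤ) : ℝ)}

/-- The integer cone generated by a finite family of integer vectors, viewed in `ℝᵈ`. -/
def intconeCols {d : ℕ} (cols : Fin d → (Fin d → ℤ)) : Set (Fin d → ℝ) :=
  {x | ∃ lam : Fin d → ℕ, x = ∑ k, (lam k : ℝ) • fun j => ((cols k j : ℤ) : ℝ)}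

/-- Coefficient-wise linear independence of the columns indexed by `K`. -/
def IndepOn {d t : ℕ} (c : Fin t → Fin d → ℝ) (K : Finset (Fin t)) : Prop :=
  ∀ g : Fin t → ℝ, ∑ j ∈ K, g j • c j = 0 → ∀ j ∈ K, g j = 0

/-- Bounded Carathéodory: a conic representation can be replaced by one with
linearly independent support, support inside the original support, and no larger
total coefficient sum. -/
lemma core_lemma {d t : ℕ} (v : Fin t → Fin d → ℝ) :
    ∀ n (s0 : Fin t → ℝ), (Finset.univ.filter fun j => s0 j ≠ 0).card ≤ n →
      (∀ j, 0 ≤ s0 j) →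
      ∃ s : Fin t → ℝ, (∀ j, 0 ≤ s j) ∧ (∀ j, s0 j = 0 → s j = 0) ∧
        (∑ j, s j) ≤ (∑ j, s0 j) ∧ (∑ j, s j • v j) = (∑ j, s0 j • v j) ∧
        IndepOn v (Finset.univ.filter fun j => s j ≠ 0) := by
  intro n
  induction n with
  | zero =>
    intro s0 hcard hnn
    refine ⟨s0, hnn, fun j h => h, le_rfl, rfl, ?_⟩
    intro g hg j hj
    have h0 : (Finset.univ.filter fun j => s0 j ≠ 0) = ∅ :=
      Finset.card_eq_zero.mp (Nat.le_zero.mp hcard)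
    rw [h0] at hj
    exact absurd hj (Finset.notMem_empty j)
  | succ n ih =>
    intro s0 hcard hnn
    by_cases hind : IndepOn v (Finset.univ.filter fun j => s0 j ≠ 0)
    · exact ⟨s0, hnn, fun j h => h, le_rfl, rfl, hind⟩
    set K := Finset.univ.filter (fun j => s0 j ≠ 0) with hK
    unfold IndepOn at hind
    push_neg at hind
    obtain ⟨g, hgsum, j₁, hj₁, hgj₁⟩ := hind
    set γ : Fin t → ℝ := fun j => if j ∈ K then g j else 0 with hγ
    have hγsupp : ∀ j, j ∉ K → γ j = 0 := fun j hj => by simp [hγ, hj]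
    have hγsum : ∑ j, γ j • v j = 0 := by
      have h1 : ∑ j ∈ K, γ j • v j = ∑ j, γ j • v j :=
        Finset.sum_subset (Finset.subset_univ K)
          (fun x _ hx => by rw [hγsupp x hx, zero_smul])
      have h2 : ∑ j ∈ K, γ j • v j = ∑ j ∈ K, g j • v j :=
        Finset.sum_congr rfl (fun x hx => by simp [hγ, hx])
      rw [← h1, h2, hgsum]
    have hγj₁ : γ j₁ ≠ 0 := by simpa [hγ, hj₁] using hgj₁
    obtain ⟨γ', hsum0, hsupp', hnn', hpos'⟩ :
        ∃ γ' : Fin t → ℝ, (∑ j, γ' j • v j = 0) ∧ (∀ j, j ∉ K → γ' j = 0) ∧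
          (0 ≤ ∑ j, γ' j) ∧ ∃ j, 0 < γ' j := by
      rcases le_or_gt 0 (∑ j, γ j) with h | h
      · refine ⟨γ, hγsum, hγsupp, h, ?_⟩
        by_contra hall
        push_neg at hall
        have h0 : ∑ j, γ j = 0 :=
          le_antisymm (Finset.sum_nonpos (fun j _ => hall j)) h
        have hz := (Finset.sum_eq_zero_iff_of_nonpos (fun j _ => hall j)).mp h0
        exact hγj₁ (hz j₁ (Finset.mem_univ j₁))
      · refine ⟨-γ, ?_, fun j hj => by simp [hγsupp j hj], ?_, ?_⟩
        · have : ∑ j, (-γ) j • v j = -∑ j, γ j • v j := by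
            rw [← Finset.sum_neg_distrib]
            exact Finset.sum_congr rfl (fun j _ => by simp [neg_smul])
          rw [this, hγsum, neg_zero]
        · have : ∑ j, (-γ) j = -∑ j, γ j := by simp
          rw [this]
          linarith
        · by_contra hall
          push_neg at hall
          have : 0 ≤ ∑ j, γ j :=
            Finset.sum_nonneg (fun j _ => by
              have := hall j
              simp only [Pi.neg_apply] at this
              linarith)
          linarith
    obtain ⟨j₀, hj₀⟩ := hpos'
    have hTne : j₀ ∈ Finset.univ.filter (fun j => 0 < γ' j) := by simp [hj₀]
    obtain ⟨jm, hjmT, hjmmin⟩ :=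
      Finset.exists_min_image (Finset.univ.filter (fun j => 0 < γ' j))
        (fun j => s0 j / γ' j) ⟨j₀, hTne⟩
    have hγjm : 0 < γ' jm := (Finset.mem_filter.mp hjmT).2
    set θ := s0 jm / γ' jm with hθdef
    have hθ : 0 ≤ θ := div_nonneg (hnn jm) hγjm.le
    set s1 : Fin t → ℝ := fun j => s0 j - θ * γ' j with hs1
    have hs1nn : ∀ j, 0 ≤ s1 j := by
      intro j
      by_cases hj : 0 < γ' j
      · have hmin := hjmmin j (by simp [hj])
        have hle : θ * γ' j ≤ s0 j := by
          calc θ * γ' j ≤ s0 j / γ' j * γ' j :=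
                mul_le_mul_of_nonneg_right hmin hj.le
            _ = s0 j := div_mul_cancel₀ _ hj.ne'
        simp only [hs1]
        linarith
      · push_neg at hj
        have : θ * γ' j ≤ 0 := mul_nonpos_of_nonneg_of_nonpos hθ hj
        have := hnn j
        simp only [hs1]
        linarith
    have hs1jm : s1 jm = 0 := by
      simp only [hs1, hθdef]
      rw [div_mul_cancel₀ _ hγjm.ne', sub_self]
    have hs1supp : ∀ j, s0 j = 0 → s1 j = 0 := by
      intro j h0
      have hjK : j ∉ K := by simp [hK, h0]
      simp [hs1, h0, hsupp' j hjK]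
    have hsub : (Finset.univ.filter fun j => s1 j ≠ 0) ⊆ K := by
      intro j hj
      simp only [Finset.mem_filter, Finset.mem_univ, true_and] at hj
      simp only [hK, Finset.mem_filter, Finset.mem_univ, true_and]
      intro h0
      exact hj (hs1supp j h0)
    have hjmK : jm ∈ K := by
      by_contra h
      exact hγjm.ne' (hsupp' jm h)
    have hcard1 : (Finset.univ.filter fun j => s1 j ≠ 0).card ≤ n := by
      have hss : (Finset.univ.filter fun j => s1 j ≠ 0) ⊂ K := by
        rw [Finset.ssubset_iff_of_subset hsub]
        exact ⟨jm, hjmK, by simp [hs1jm]⟩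
      have hlt := Finset.card_lt_card hss
      omega
    have hs1sum : ∑ j, s1 j ≤ ∑ j, s0 j := by
      simp only [hs1]
      rw [Finset.sum_sub_distrib]
      have : 0 ≤ ∑ j, θ * γ' j := by
        rw [← Finset.mul_sum]
        exact mul_nonneg hθ hnn'
      linarith
    have hs1vec : ∑ j, s1 j • v j = ∑ j, s0 j • v j := by
      simp only [hs1, sub_smul]
      rw [Finset.sum_sub_distrib]
      have : ∑ j, (θ * γ' j) • v j = 0 := by
        have h1 : ∀ j ∈ Finset.univ, (θ * γ' j) • v j = θ • (γ' j • v j) :=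
          fun j _ => by rw [mul_smul]
        rw [Finset.sum_congr rfl h1, ← Finset.smul_sum, hsum0, smul_zero]
      rw [this, sub_zero]
    obtain ⟨s, h1, h2, h3, h4, h5⟩ := ih s1 hcard1 hs1nn
    exact ⟨s, h1, fun j h0 => h2 j (hs1supp j h0), le_trans h3 hs1sum,
      h4.trans hs1vec, h5⟩

/-- An independent set of at most `d` columns of a spanning family in `ℝᵈ`
extends to an independent set of exactly `d` columns. -/
lemma ext_lemma {d t : ℕ} (c : Fin t → Fin d → ℝ)
    (hspan : Submodule.span ℝ (Set.range c) = ⊤) :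
    ∀ m (K : Finset (Fin t)), d - K.card ≤ m → K.card ≤ d → IndepOn c K →
      ∃ K' : Finset (Fin t), K ⊆ K' ∧ K'.card = d ∧ IndepOn c K' := by
  intro m
  induction m with
  | zero =>
    intro K hm hle hK
    exact ⟨K, Finset.Subset.refl K, by omega, hK⟩
  | succ m ih =>
    intro K hm hle hK
    by_cases hcd : K.card = d
    · exact ⟨K, Finset.Subset.refl K, hcd, hK⟩
    have hlt : K.card < d := lt_of_le_of_ne hle hcd
    have hstep : ∃ j₀, c j₀ ∉ Submodule.span ℝ ((K.image c : Finset (Fin d → ℝ)) : Set (Fin d → ℝ)) := by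
      by_contra hall
      push_neg at hall
      have hsub : Set.range c ⊆
          (Submodule.span ℝ ((K.image c : Finset (Fin d → ℝ)) : Set (Fin d → ℝ)) : Set (Fin d → ℝ)) := by
        rintro _ ⟨j, rfl⟩
        exact hall j
      have htop : Submodule.span ℝ ((K.image c : Finset (Fin d → ℝ)) : Set (Fin d → ℝ)) = ⊤ := by
        rw [eq_top_iff, ← hspan]
        exact Submodule.span_le.mpr hsub
      have h1 : Module.finrank ℝ
          (Submodule.span ℝ ((K.image c : Finset (Fin d → ℝ)) : Set (Fin d → ℝ))) ≤ (K.image c).card :=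
        finrank_span_finset_le_card (K.image c)
      have h2 : (K.image c).card ≤ K.card := Finset.card_image_le
      have h3 : Module.finrank ℝ
          (Submodule.span ℝ ((K.image c : Finset (Fin d → ℝ)) : Set (Fin d → ℝ))) = d := by
        rw [htop, finrank_top, Module.finrank_pi, Fintype.card_fin]
      omega
    obtain ⟨j₀, hj₀⟩ := hstep
    have hj₀K : j₀ ∉ K := by
      intro hmem
      exact hj₀ (Submodule.subset_span (by simp [Finset.mem_image]; exact ⟨j₀, hmem, rfl⟩))
    have hK1 : IndepOn c (insert j₀ K) := by
      intro g hg j hj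
      rw [Finset.sum_insert hj₀K] at hg
      have hg0 : g j₀ = 0 := by
        by_contra hne
        apply hj₀
        have : c j₀ = (-(g j₀)⁻¹) • ∑ j ∈ K, g j • c j := by
          have h1 : g j₀ • c j₀ = -∑ j ∈ K, g j • c j := by
            rw [eq_neg_iff_add_eq_zero]
            exact hg
          calc c j₀ = (g j₀)⁻¹ • (g j₀ • c j₀) := by
                rw [← smul_assoc, smul_eq_mul, inv_mul_cancel₀ hne, one_smul]
            _ = (g j₀)⁻¹ • (-∑ j ∈ K, g j • c j) := by rw [h1]
            _ = (-(g j₀)⁻¹) • ∑ j ∈ K, g j • c j := by rw [smul_neg, neg_smul]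
        rw [this]
        refine Submodule.smul_mem _ _ (Submodule.sum_mem _ fun j hj => ?_)
        refine Submodule.smul_mem _ _ (Submodule.subset_span ?_)
        simp only [Finset.coe_image, Set.mem_image, Finset.mem_coe]
        exact ⟨j, hj, rfl⟩
      have hsum : ∑ j ∈ K, g j • c j = 0 := by
        rw [hg0, zero_smul, zero_add] at hg
        exact hg
      rcases Finset.mem_insert.mp hj with h | h
      · rw [h]; exact hg0
      · exact hK g hsum j h
    have hcard1 : (insert j₀ K).card = K.card + 1 := Finset.card_insert_of_notMem hj₀K
    obtain ⟨K', hsub', hcard', hind'⟩ := ih (insert j₀ K) (by omega) (by omega) hK1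
    exact ⟨K', (Finset.subset_insert j₀ K).trans hsub', hcard', hind'⟩

/-- Convert coefficient-wise independence on a `d`-element finset to
`LinearIndependent` of the associated `Fin d`-indexed family. -/
lemma indepOn_li {d t : ℕ} (c : Fin t → Fin d → ℝ) (K : Finset (Fin t))
    (hcard : K.card = d) (h : IndepOn c K) :
    LinearIndependent ℝ (fun k : Fin d => c (((K.equivFinOfCardEq hcard).symm k) : Fin t)) := by
  rw [Fintype.linearIndependent_iff]
  intro g hg
  set e := K.equivFinOfCardEq hcard with he
  set G : Fin t → ℝ := fun j => if hj : j ∈ K then g (e ⟨j, hj⟩) else 0 with hG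
  have hsum : ∑ j ∈ K, G j • c j = 0 := by
    rw [← Finset.sum_attach K (fun j => G j • c j)]
    have h1 : ∀ j ∈ K.attach, G (j : Fin t) • c (j : Fin t)
        = (fun k : Fin d => g k • c ((e.symm k : { x // x ∈ K }) : Fin t)) (e j) := by
      intro j _
      simp only [hG, dif_pos j.2, Subtype.coe_eta, Equiv.symm_apply_apply]
    rw [Finset.sum_congr rfl h1, ← Finset.univ_eq_attach,
      Equiv.sum_comp e (fun k : Fin d => g k • c ((e.symm k : { x // x ∈ K }) : Fin t))]
    exact hg
  intro k
  have hmem : ((e.symm k : { x // x ∈ K }) : Fin t) ∈ K := (e.symm k).2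
  have := h G hsum _ hmem
  rw [hG] at this
  simp only [dif_pos hmem, Subtype.coe_eta, Equiv.apply_symm_apply] at this
  exact this

/-- Convert coefficient-wise independence to `LinearIndependent` over the subtype. -/
lemma indepOn_li_subtype {d t : ℕ} (c : Fin t → Fin d → ℝ) (K : Finset (Fin t))
    (h : IndepOn c K) :
    LinearIndependent ℝ (fun j : {j : Fin t // j ∈ K} => c j) := by
  rw [Fintype.linearIndependent_iff]
  intro g hg
  set G : Fin t → ℝ := fun j => if hj : j ∈ K then g ⟨j, hj⟩ else 0 with hGdef
  have hsum : ∑ j ∈ K, G j • c j = 0 := by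
    rw [← Finset.sum_attach K (fun j => G j • c j)]
    have h1 : ∀ j ∈ K.attach, G (j : Fin t) • c (j : Fin t) = g j • c (j : Fin t) :=
      fun j _ => by simp only [hGdef, dif_pos j.2, Subtype.coe_eta]
    rw [Finset.sum_congr rfl h1, ← Finset.univ_eq_attach]
    exact hg
  intro j
  have := h G hsum j j.2
  simpa only [hGdef, dif_pos j.2, Subtype.coe_eta] using this

/-- Let `D ∈ ℤ^{d×t}` have rank `d`, let `p = Σᵢ νᵢ wᵢ` with all `νᵢ > 0` and
`ν_{i*} ≥ t + 1`.  Suppose that for every choice `σ` of `d` linearly independent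
columns of `D` whose cone contains `p`, every `wᵢ` lies in the integer cone of
these columns.  Then every nonnegative integral solution `x` of `D x = p`
dominates a nonnegative integral solution `y ≤ x` of `D y = w_{i*}`. -/
theorem extract_small_generator
    (d t ℓ : ℕ) (hd : 1 ≤ d) (ht : 1 ≤ t)
    (D : Matrix (Fin d) (Fin t) ℤ)
    (hrank : (D.map (Int.cast : ℤ → ℝ)).rank = d)
    (p : Fin d → ℤ) (w : Fin ℓ → (Fin d → ℤ)) (ν : Fin ℓ → ℝ)
    (hν : ∀ i, 0 < ν i)
    (hp : (fun j => ((p j : ℤ) : ℝ)) = ∑ i, ν i • fun j => ((w i j : ℤ) : ℝ))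
    (istar : Fin ℓ) (histar : (t : ℝ) + 1 ≤ ν istar)
    (hcols : ∀ σ : Fin d → Fin t,
      LinearIndependent ℝ (fun k : Fin d => fun j : Fin d => ((D j (σ k) : ℤ) : ℝ)) →
      (fun j => ((p j : ℤ) : ℝ)) ∈ coneCols (fun k j => D j (σ k)) →
      ∀ i, (fun j => ((w i j : ℤ) : ℝ)) ∈ intconeCols (fun k j => D j (σ k))) :
    ∀ x : Fin t → ℤ, (∀ i, 0 ≤ x i) → D.mulVec x = p →
      ∃ y : Fin t → ℤ, (∀ i, 0 ≤ y i) ∧ (∀ i, y i ≤ x i) ∧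
        D.mulVec y = w istar := by
  intro x hx hDx
  set c : Fin t → Fin d → ℝ := fun j i => ((D i j : ℤ) : ℝ) with hc
  set xR : Fin t → ℝ := fun j => ((x j : ℤ) : ℝ) with hxRdef
  have hxRnn : ∀ j, 0 ≤ xR j := fun j => by
    simp only [hxRdef]
    exact_mod_cast hx j
  -- p as a real conic combination of the columns
  have hpR : (fun i => ((p i : ℤ) : ℝ)) = ∑ j, xR j • c j := by
    funext i
    rw [Finset.sum_apply]
    have h0 := congrFun hDx i
    simp only [Matrix.mulVec, dotProduct] at h0
    have h1 : ((p i : ℤ) : ℝ) = ∑ j, ((D i j : ℤ) : ℝ) * ((x j : ℤ) : ℝ) := by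
      rw [← h0]
      push_cast
      ring
    rw [h1]
    exact Finset.sum_congr rfl (fun j _ => by
      simp only [Pi.smul_apply, smul_eq_mul, hc, hxRdef, mul_comm])
  -- bounded Carathéodory
  obtain ⟨s, hsnn, -, hssum, hsvec, hsind⟩ :=
    core_lemma (fun j => xR j • c j) t (fun _ => (1 : ℝ))
      ((Finset.card_filter_le _ _).trans (by simp))
      (fun _ => zero_le_one)
  set u : Fin t → ℝ := fun j => s j * xR j with hudef
  have hpu : (fun i => ((p i : ℤ) : ℝ)) = ∑ j, u j • c j := by
    rw [hpR]
    have h1 : ∑ j, u j • c j = ∑ j, s j • (xR j • c j) :=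
      Finset.sum_congr rfl (fun j _ => by rw [hudef, smul_smul])
    rw [h1, hsvec]
    exact (Finset.sum_congr rfl (fun j _ => by rw [one_smul])).symm
  have hssum' : ∑ j, s j ≤ (t : ℝ) := by
    have : ∑ _j : Fin t, (1 : ℝ) = (t : ℝ) := by simp
    linarith [hssum, this.le, this.ge]
  -- independence of the actual columns on the support of u
  set Ku : Finset (Fin t) := Finset.univ.filter (fun j => u j ≠ 0) with hKudef
  have hindc : IndepOn c Ku := by
    intro g hg j hj
    set g' : Fin t → ℝ := fun j => if u j ≠ 0 then g j / xR j else 0 with hg'def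
    have hsub2 : Ku ⊆ Finset.univ.filter (fun j => s j ≠ 0) := by
      intro j2 hj2
      simp only [hKudef, Finset.mem_filter, Finset.mem_univ, true_and] at hj2 ⊢
      exact left_ne_zero_of_mul hj2
    have hsum' : ∑ j ∈ Finset.univ.filter (fun j => s j ≠ 0), g' j • (xR j • c j) = 0 := by
      rw [← Finset.sum_subset hsub2 (fun j2 _ hj2 => by
        have hu0 : ¬ u j2 ≠ 0 := by
          simpa [hKudef, Finset.mem_filter] using hj2
        simp [hg'def, hu0])]
      rw [← hg]
      refine Finset.sum_congr rfl (fun j2 hj2 => ?_)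
      have hu2 : u j2 ≠ 0 := by
        simpa [hKudef, Finset.mem_filter] using hj2
      have hx2 : xR j2 ≠ 0 := right_ne_zero_of_mul hu2
      simp only [hg'def, if_pos hu2, smul_smul]
      rw [div_mul_cancel₀ _ hx2]
    have hg'0 := hsind g' hsum' j (hsub2 hj)
    have hu2 : u j ≠ 0 := by
      simpa [hKudef, Finset.mem_filter] using hj
    have hx2 : xR j ≠ 0 := right_ne_zero_of_mul hu2
    rw [hg'def] at hg'0
    simp only [if_pos hu2] at hg'0
    exact (div_eq_zero_iff.mp hg'0).resolve_right hx2
  -- independent sets have at most d elements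
  have hcardle : Ku.card ≤ d := by
    have h1 := (indepOn_li_subtype c Ku hindc).fintype_card_le_finrank
    simpa [Module.finrank_pi] using h1
  -- the columns span the whole space
  have hspan : Submodule.span ℝ (Set.range c) = ⊤ := by
    apply Submodule.eq_top_of_finrank_eq
    have h1 : LinearMap.range (D.map (Int.cast : ℤ → ℝ)).mulVecLin
        = Submodule.span ℝ (Set.range (D.map (Int.cast : ℤ → ℝ)).transpose) :=
      Matrix.range_mulVecLin _
    have h2 : Set.range (D.map (Int.cast : ℤ → ℝ)).transpose = Set.range c := rfl
    have h3 : Module.finrank ℝ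
        (LinearMap.range (D.map (Int.cast : ℤ → ℝ)).mulVecLin) = d := hrank
    rw [← h2, ← h1, h3, Module.finrank_pi, Fintype.card_fin]
  -- extend to a basis choice among the columns
  obtain ⟨K', hKsub, hKcard, hKind⟩ :=
    ext_lemma c hspan d Ku (Nat.sub_le d Ku.card) hcardle hindc
  set e := K'.equivFinOfCardEq hKcard with hedef
  set σ : Fin d → Fin t := fun k => ((e.symm k : { j // j ∈ K' }) : Fin t) with hσdef
  have hLI : LinearIndependent ℝ (fun k : Fin d => c (σ k)) :=
    indepOn_li c K' hKcard hKind
  have hσmem : ∀ k, σ k ∈ K' := fun k => (e.symm k).2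
  -- u vanishes off K'
  have huK' : ∀ j, j ∉ K' → u j = 0 := by
    intro j hj
    by_contra hne
    exact hj (hKsub (by simp [hKudef, hne]))
  -- p in the cone of the chosen columns
  have hpσ : (fun i => ((p i : ℤ) : ℝ)) = ∑ k, u (σ k) • c (σ k) := by
    rw [hpu]
    rw [← Finset.sum_subset (Finset.subset_univ K') (fun j _ hj => by
      rw [huK' j hj, zero_smul])]
    rw [← Finset.sum_attach K' (fun j => u j • c j), ← Finset.univ_eq_attach]
    rw [← Equiv.sum_comp e (fun k : Fin d => u (σ k) • c (σ k))]
    refine Finset.sum_congr rfl (fun j _ => ?_)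
    simp only [hσdef, Equiv.symm_apply_apply]
  have hcone : (fun j => ((p j : ℤ) : ℝ)) ∈ coneCols (fun k j => D j (σ k)) :=
    ⟨fun k => u (σ k), fun k => mul_nonneg (hsnn _) (hxRnn _), hpσ⟩
  -- integer representations of the w i
  have hw : ∀ i, ∃ μ : Fin d → ℕ,
      (fun j => ((w i j : ℤ) : ℝ)) = ∑ k, (μ k : ℝ) • c (σ k) :=
    fun i => hcols σ hLI hcone i
  choose μ hμ using hw
  -- uniqueness of the coefficients of p
  have hb : (fun j => ((p j : ℤ) : ℝ)) = ∑ k, (∑ i, ν i * (μ i k : ℝ)) • c (σ k) := by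
    rw [hp]
    calc ∑ i, ν i • (fun j => ((w i j : ℤ) : ℝ))
        = ∑ i, ν i • ∑ k, (μ i k : ℝ) • c (σ k) :=
          Finset.sum_congr rfl (fun i _ => by rw [hμ i])
      _ = ∑ i, ∑ k, (ν i * (μ i k : ℝ)) • c (σ k) := by
          refine Finset.sum_congr rfl (fun i _ => ?_)
          rw [Finset.smul_sum]
          exact Finset.sum_congr rfl (fun k _ => by rw [smul_smul])
      _ = ∑ k, ∑ i, (ν i * (μ i k : ℝ)) • c (σ k) := Finset.sum_comm
      _ = ∑ k, (∑ i, ν i * (μ i k : ℝ)) • c (σ k) := by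
          refine Finset.sum_congr rfl (fun k _ => ?_)
          rw [Finset.sum_smul]
  have huniq : ∀ k, u (σ k) = ∑ i, ν i * (μ i k : ℝ) := by
    intro k
    have h0 : ∑ k, (u (σ k) - ∑ i, ν i * (μ i k : ℝ)) • c (σ k) = 0 := by
      have h1 : ∀ k' ∈ Finset.univ, (u (σ k') - ∑ i, ν i * (μ i k' : ℝ)) • c (σ k')
          = u (σ k') • c (σ k') - (∑ i, ν i * (μ i k' : ℝ)) • c (σ k') :=
        fun k' _ => sub_smul _ _ _
      rw [Finset.sum_congr rfl h1, Finset.sum_sub_distrib, ← hpσ, ← hb, sub_self]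
    have := Fintype.linearIndependent_iff.mp hLI _ h0 k
    linarith [this]
  -- key bound
  have hkey : ∀ k, ((t : ℝ) + 1) * (μ istar k : ℝ) ≤ (t : ℝ) * xR (σ k) := by
    intro k
    have h1 : ν istar * (μ istar k : ℝ) ≤ ∑ i, ν i * (μ i k : ℝ) :=
      Finset.single_le_sum (f := fun i => ν i * (μ i k : ℝ))
        (fun i _ => mul_nonneg (hν i).le (Nat.cast_nonneg _))
        (Finset.mem_univ istar)
    have h2 := huniq k
    have hsle : s (σ k) ≤ (t : ℝ) :=
      le_trans (Finset.single_le_sum (fun j _ => hsnn j) (Finset.mem_univ (σ k))) hssum'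
    have h3 : u (σ k) ≤ (t : ℝ) * xR (σ k) := by
      rw [hudef]
      exact mul_le_mul_of_nonneg_right hsle (hxRnn _)
    have h4 : ((t : ℝ) + 1) * (μ istar k : ℝ) ≤ ν istar * (μ istar k : ℝ) :=
      mul_le_mul_of_nonneg_right histar (Nat.cast_nonneg _)
    linarith
  have hμle : ∀ k, (μ istar k : ℤ) ≤ x (σ k) := by
    intro k
    have hmu0 : (0 : ℝ) ≤ (μ istar k : ℝ) := Nat.cast_nonneg _
    have htr : (0 : ℝ) ≤ (t : ℝ) := Nat.cast_nonneg _
    by_contra hcon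
    push_neg at hcon
    have hxlt : (x (σ k) : ℝ) < (μ istar k : ℝ) := by exact_mod_cast hcon
    have hxk : (0 : ℝ) ≤ (x (σ k) : ℝ) := by exact_mod_cast hx (σ k)
    have hxr : xR (σ k) = ((x (σ k) : ℤ) : ℝ) := rfl
    nlinarith [hkey k, mul_nonneg htr (sub_nonneg.mpr hxlt.le), hxk, hmu0, hxr]
  -- define y
  set y : Fin t → ℤ := fun j => if hj : j ∈ K' then (μ istar (e ⟨j, hj⟩) : ℤ) else 0
    with hydef
  refine ⟨y, ?_, ?_, ?_⟩
  · intro j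
    rw [hydef]
    by_cases hj : j ∈ K'
    · simp [dif_pos hj]
    · simp [dif_neg hj]
  · intro j
    by_cases hj : j ∈ K'
    · have hyj : y j = (μ istar (e ⟨j, hj⟩) : ℤ) := by rw [hydef]; simp [dif_pos hj]
      rw [hyj]
      have hσj : σ (e ⟨j, hj⟩) = j := by
        simp only [hσdef, Equiv.symm_apply_apply]
      have := hμle (e ⟨j, hj⟩)
      rwa [hσj] at this
    · have hyj : y j = 0 := by rw [hydef]; simp [dif_neg hj]
      rw [hyj]
      exact hx j
  · funext i
    have hreal : ((D.mulVec y i : ℤ) : ℝ) = ((w istar i : ℤ) : ℝ) := by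
      have hLHS : ((D.mulVec y i : ℤ) : ℝ) = ∑ j, ((D i j : ℤ) : ℝ) * ((y j : ℤ) : ℝ) := by
        simp only [Matrix.mulVec, dotProduct]
        push_cast
        ring
      have hy0 : ∀ j, j ∉ K' → ((D i j : ℤ) : ℝ) * ((y j : ℤ) : ℝ) = 0 := by
        intro j hj
        have : y j = 0 := by rw [hydef]; simp [dif_neg hj]
        rw [this]
        simp
      rw [hLHS, ← Finset.sum_subset (Finset.subset_univ K') (fun j _ hj => hy0 j hj)]
      rw [← Finset.sum_attach K' (fun j => ((D i j : ℤ) : ℝ) * ((y j : ℤ) : ℝ)),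
        ← Finset.univ_eq_attach]
      have hterm : ∀ j : { j // j ∈ K' },
          ((D i (j : Fin t) : ℤ) : ℝ) * ((y (j : Fin t) : ℤ) : ℝ)
          = ((D i (σ (e j)) : ℤ) : ℝ) * ((μ istar (e j) : ℕ) : ℝ) := by
        intro j
        have hσj : σ (e j) = (j : Fin t) := by
          simp only [hσdef, Equiv.symm_apply_apply]
        have hyj : y (j : Fin t) = (μ istar (e j) : ℤ) := by
          rw [hydef]
          simp only [dif_pos j.2, Subtype.coe_eta]
        rw [hσj, hyj]
        push_cast
        ring
      rw [Fintype.sum_equiv e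
        (fun j : { j // j ∈ K' } => ((D i (j : Fin t) : ℤ) : ℝ) * ((y (j : Fin t) : ℤ) : ℝ))
        (fun k : Fin d => ((D i (σ k) : ℤ) : ℝ) * ((μ istar k : ℕ) : ℝ)) hterm]
      have hwr := congrFun (hμ istar) i
      rw [Finset.sum_apply] at hwr
      rw [hwr]
      exact Finset.sum_congr rfl (fun k _ => by
        simp only [Pi.smul_apply, smul_eq_mul, hc, mul_comm])
    exact_mod_cast hreal
end

section
/- There exists a universal constant c > 0 such that for all integers d, t ≥ 1 and Δ ≥ 1, every matrix D ∈ ℤ^{d×t} with all entries of absolute value at most Δ and every g ∈ 𝒢(D) satisfy ‖g‖_1 ≤ (c·d·Δ)^d. -/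
open Finset Module

lemma exists_add_mul_mem_Icc_of_mem_Ioo {𝕜 ι : Type*} [Field 𝕜] [LinearOrder 𝕜]
    [IsStrictOrderedRing 𝕜] (F : Finset ι) (μ c : ι → 𝕜)
    (hμ : ∀ i ∈ F, μ i ∈ Set.Ioo 0 1) (hc : ∃ i ∈ F, c i ≠ 0) :
    ∃ ε : 𝕜, (∀ i ∈ F, μ i + ε * c i ∈ Set.Icc 0 1) ∧
      ∃ i ∈ F, μ i + ε * c i = 0 ∨ μ i + ε * c i = 1 := by
  -- the `i`-th coordinate of `μ + t • c` leaves `[0, 1]` at time `1 / ρ i`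
  set ρ : ι → 𝕜 := fun i => max (c i / (1 - μ i)) (-c i / μ i)
  obtain ⟨i₀, hi₀F, hci₀⟩ := hc
  obtain ⟨j, hjF, hj⟩ := F.exists_max_image ρ ⟨i₀, hi₀F⟩
  have hρ : 0 < ρ j := by
    obtain ⟨h0, h1⟩ := hμ i₀ hi₀F
    refine lt_of_lt_of_le ?_ (hj i₀ hi₀F)
    rcases hci₀.lt_or_gt with hneg | hpos
    · exact lt_max_of_lt_right (div_pos (neg_pos.2 hneg) h0)
    · exact lt_max_of_lt_left (div_pos hpos (sub_pos.2 h1))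
  refine ⟨(ρ j)⁻¹, fun i hi => ?_, j, hjF, ?_⟩
  · obtain ⟨h0, h1⟩ := hμ i hi
    have hup : c i / (1 - μ i) ≤ ρ j := (le_max_left _ _).trans (hj i hi)
    have hlow : -c i / μ i ≤ ρ j := (le_max_right _ _).trans (hj i hi)
    rw [div_le_iff₀ (sub_pos.2 h1)] at hup
    rw [div_le_iff₀ h0] at hlow
    constructor
    · rw [← mul_le_mul_iff_of_pos_left hρ]
      field_simp
      linarith
    · rw [← mul_le_mul_iff_of_pos_left hρ]
      field_simp
      linarith
  · obtain ⟨h0, h1⟩ := hμ j hjF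
    have hcj : c j ≠ 0 := by
      rintro hcj
      simp [ρ, hcj] at hρ
    rcases max_choice (c j / (1 - μ j)) (-c j / μ j) with h | h <;>
      simp only [ρ, h] <;> field_simp
    · right; ring
    · left; ring

section Vertex

variable {𝕜 M ι : Type*} [Field 𝕜] [AddCommGroup M] [Module 𝕜 M] [FiniteDimensional 𝕜 M]
  [Fintype ι]

lemma exists_nontrivial_relation_supported_of_finrank_lt_card (u : ι → M) {F : Finset ι}
    (hF : finrank 𝕜 M < #F) :
    ∃ c : ι → 𝕜, (∀ i ∉ F, c i = 0) ∧ (∃ i ∈ F, c i ≠ 0) ∧ ∑ i, c i • u i = 0 := by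
  classical
  have hdep : ¬ LinearIndepOn 𝕜 u (F : Set ι) := fun h =>
    hF.not_ge (by simpa using h.fintype_card_le_finrank)
  obtain ⟨f, hf, i, hi, hfi⟩ := not_linearIndepOn_finset_iff.1 hdep
  refine ⟨fun i => if i ∈ F then f i else 0, fun j hj => if_neg hj, ⟨i, hi, by simpa [hi]⟩, ?_⟩
  simpa [ite_smul] using hf

variable [LinearOrder 𝕜]

def fractionalSupport (μ : ι → 𝕜) : Finset ι := {i | μ i ≠ 0 ∧ μ i ≠ 1}

lemma mem_fractionalSupport {μ : ι → 𝕜} {i : ι} (hμ : μ i ∈ Set.Icc 0 1) :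
    i ∈ fractionalSupport μ ↔ μ i ∈ Set.Ioo 0 1 := by
  simp only [fractionalSupport, mem_filter, mem_univ, true_and, Set.mem_Ioo]
  exact ⟨fun h => ⟨hμ.1.lt_of_ne' h.1, hμ.2.lt_of_ne h.2⟩, fun h => ⟨h.1.ne', h.2.ne⟩⟩

variable [IsStrictOrderedRing 𝕜]

lemma exists_fractionalSupport_ssubset (u : ι → M) (μ : ι → 𝕜) (hμ : ∀ i, μ i ∈ Set.Icc 0 1)
    (hcard : finrank 𝕜 M < #(fractionalSupport μ)) :
    ∃ μ' : ι → 𝕜, (∀ i, μ' i ∈ Set.Icc 0 1) ∧ Function.support μ' ⊆ Function.support μ ∧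
      ∑ i, μ' i • u i = ∑ i, μ i • u i ∧ fractionalSupport μ' ⊂ fractionalSupport μ := by
  set F := fractionalSupport μ
  obtain ⟨c, hcF, hc0, hcu⟩ := exists_nontrivial_relation_supported_of_finrank_lt_card u hcard
  have hF : ∀ i ∈ F, μ i ∈ Set.Ioo 0 1 := fun i hi => (mem_fractionalSupport (hμ i)).1 hi
  obtain ⟨ε, hεF, j, hjF, hj⟩ := exists_add_mul_mem_Icc_of_mem_Ioo F μ c hF hc0
  have hout : ∀ i ∉ F, (μ + ε • c) i = μ i := fun i hi => by simp [hcF i hi]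
  have hμ' : ∀ i, (μ + ε • c) i ∈ Set.Icc 0 1 := fun i => by
    by_cases hi : i ∈ F
    · exact hεF i hi
    · exact (hout i hi).symm ▸ hμ i
  refine ⟨μ + ε • c, hμ', fun i hi => ?_, ?_, ?_⟩
  · by_cases hiF : i ∈ F
    · exact (hF i hiF).1.ne'
    · rwa [Function.mem_support, ← hout i hiF]
  · simp only [Pi.add_apply, Pi.smul_apply, smul_eq_mul, add_smul, mul_smul, sum_add_distrib,
      ← smul_sum, hcu, smul_zero, add_zero]
  · rw [ssubset_iff_of_subset]
    · refine ⟨j, hjF, fun hj' => ?_⟩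
      have := (mem_fractionalSupport (hμ' j)).1 hj'
      rcases hj with h | h <;> simp [h] at this
    · intro i hi
      by_contra hiF
      have := (mem_fractionalSupport (hμ' i)).1 hi
      rw [hout i hiF] at this
      exact hiF ((mem_fractionalSupport (hμ i)).2 this)

lemma exists_card_fractionalSupport_le (u : ι → M) (μ : ι → 𝕜) (hμ : ∀ i, μ i ∈ Set.Icc 0 1) :
    ∃ μ' : ι → 𝕜, (∀ i, μ' i ∈ Set.Icc 0 1) ∧ Function.support μ' ⊆ Function.support μ ∧
      ∑ i, μ' i • u i = ∑ i, μ i • u i ∧ #(fractionalSupport μ') ≤ finrank 𝕜 M := by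
  induction hn : #(fractionalSupport μ) using Nat.strong_induction_on generalizing μ with
  | _ n ih =>
  by_cases hle : n ≤ finrank 𝕜 M
  · exact ⟨μ, hμ, subset_rfl, rfl, hn ▸ hle⟩
  obtain ⟨μ₁, hμ₁, hsupp₁, hsum₁, hssub⟩ := exists_fractionalSupport_ssubset u μ hμ (by omega)
  obtain ⟨μ₂, hμ₂, hsupp₂, hsum₂, hcard₂⟩ := ih _ (hn ▸ card_lt_card hssub) μ₁ hμ₁ rfl
  exact ⟨μ₂, hμ₂, hsupp₂.trans hsupp₁, hsum₂.trans hsum₁, hcard₂⟩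

lemma exists_mem_eq_zero_of_sum_le {A : Finset ι} {μ : ι → 𝕜} {n : ℕ}
    (hμ : ∀ i, μ i ∈ Set.Icc 0 1) (hsupp : Function.support μ ⊆ A)
    (hfrac : #(fractionalSupport μ) ≤ n + 1) (hsum : ∑ i, μ i ≤ #A - (n + 1)) :
    ∃ i ∈ A, μ i = 0 := by
  by_contra! h0
  have hfA : fractionalSupport μ ⊆ A := fun i hi => hsupp (mem_filter.1 hi).2.1
  have hA : ∑ i ∈ A, (1 - μ i) = ∑ i ∈ fractionalSupport μ, (1 - μ i) := by
    refine (sum_subset hfA fun i hiA hi => ?_).symm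
    simp only [fractionalSupport, mem_filter, mem_univ, true_and, not_and_not_right] at hi
    rw [hi (h0 i hiA), sub_self]
  have hfrac_lt : ∑ i ∈ fractionalSupport μ, (1 - μ i) < n + 1 := by
    rcases (fractionalSupport μ).eq_empty_or_nonempty with he | hne
    · rw [he, sum_empty]
      positivity
    · calc ∑ i ∈ fractionalSupport μ, (1 - μ i) < ∑ i ∈ fractionalSupport μ, (1 : 𝕜) :=
            sum_lt_sum_of_nonempty hne fun i hi => by
              linarith [((mem_fractionalSupport (hμ i)).1 hi).1]
        _ ≤ n + 1 := by simpa using (Nat.cast_le (α := 𝕜)).2 hfrac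
  have hμA : ∑ i ∈ A, μ i = ∑ i, μ i :=
    sum_subset (subset_univ A) fun i _ hi => Function.notMem_support.1 fun h => hi (hsupp h)
  rw [sum_sub_distrib, sum_const, nsmul_one, hμA] at hA
  linarith

end Vertex

section Steinitz

variable {𝕜 E ι : Type*} [Field 𝕜] [LinearOrder 𝕜] [AddCommGroup E] [Module 𝕜 E] [Fintype ι]

structure IsSteinitzWeight_s14 (v : ι → E) (A : Finset ι) (μ : ι → 𝕜) : Prop where
  support_subset : Function.support μ ⊆ A
  mem_Icc : ∀ i, μ i ∈ Set.Icc 0 1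
  card_sub_finrank_le_sum : (#A : 𝕜) - finrank 𝕜 E ≤ ∑ i, μ i
  sum_smul_eq_zero : ∑ i, μ i • v i = 0

variable {v : ι → E} {A : Finset ι} {μ : ι → 𝕜}

lemma IsSteinitzWeight_s14.eq_zero_of_notMem (h : IsSteinitzWeight_s14 v A μ) {i : ι} (hi : i ∉ A) :
    μ i = 0 :=
  Function.notMem_support.1 fun h' => hi (h.support_subset h')

variable [IsStrictOrderedRing 𝕜]

lemma IsSteinitzWeight_s14.abs_sum_map_le (h : IsSteinitzWeight_s14 v A μ) (φ : E →ₗ[𝕜] 𝕜) {Δ : 𝕜}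
    (hΔ : 0 ≤ Δ) (hφ : ∀ i ∈ A, |φ (v i)| ≤ Δ) :
    |∑ i ∈ A, φ (v i)| ≤ finrank 𝕜 E * Δ := by
  have hzero : ∑ i ∈ A, μ i * φ (v i) = 0 := by
    rw [sum_subset (subset_univ A) fun i _ hi => by simp [h.eq_zero_of_notMem hi]]
    simpa [map_sum] using congrArg φ h.sum_smul_eq_zero
  have hμA : ∑ i ∈ A, μ i = ∑ i, μ i :=
    sum_subset (subset_univ A) fun i _ hi => h.eq_zero_of_notMem hi
  calc |∑ i ∈ A, φ (v i)| = |∑ i ∈ A, (1 - μ i) * φ (v i)| := by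
        simp [sub_mul, sum_sub_distrib, hzero]
    _ ≤ ∑ i ∈ A, (1 - μ i) * Δ := by
        refine (abs_sum_le_sum_abs _ _).trans (sum_le_sum fun i hi => ?_)
        have h1 : 0 ≤ 1 - μ i := sub_nonneg.2 (h.mem_Icc i).2
        rw [abs_mul, abs_of_nonneg h1]
        exact mul_le_mul_of_nonneg_left (hφ i hi) h1
    _ = (#A - ∑ i, μ i) * Δ := by simp [← sum_mul, sum_sub_distrib, hμA]
    _ ≤ finrank 𝕜 E * Δ := by
        gcongr
        linarith [h.card_sub_finrank_le_sum]

lemma IsSteinitzWeight_s14.exists_sum_eq (h : IsSteinitzWeight_s14 v A μ) (hA : finrank 𝕜 E < #A) :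
    ∃ ν : ι → 𝕜, (∀ i, ν i ∈ Set.Icc 0 1) ∧ Function.support ν ⊆ A ∧
      ∑ i, ν i = #A - (finrank 𝕜 E + 1) ∧ ∑ i, ν i • v i = 0 := by
  have hA' : (finrank 𝕜 E + 1 : 𝕜) ≤ #A := by exact_mod_cast hA
  have hpos : 0 < ∑ i, μ i := by linarith [h.card_sub_finrank_le_sum]
  set α := (#A - (finrank 𝕜 E + 1)) / ∑ i, μ i
  have hα0 : 0 ≤ α := div_nonneg (by linarith) hpos.le
  have hα1 : α ≤ 1 := (div_le_one hpos).2 (by linarith [h.card_sub_finrank_le_sum])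
  refine ⟨α • μ, fun i => ?_, ?_, ?_, ?_⟩
  · obtain ⟨h0, h1⟩ := h.mem_Icc i
    exact ⟨mul_nonneg hα0 h0, mul_le_one₀ hα1 h0 h1⟩
  · exact (Function.support_const_smul_subset α μ).trans h.support_subset
  · simp only [Pi.smul_apply, smul_eq_mul, ← mul_sum, α, div_mul_cancel₀ _ hpos.ne']
  · simp only [Pi.smul_apply, smul_eq_mul, mul_smul, ← smul_sum, h.sum_smul_eq_zero, smul_zero]

variable [FiniteDimensional 𝕜 E]

lemma IsSteinitzWeight_s14.exists_erase [DecidableEq ι] (h : IsSteinitzWeight_s14 v A μ)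
    (hA : A.Nonempty) : ∃ i ∈ A, ∃ μ' : ι → 𝕜, IsSteinitzWeight_s14 v (A.erase i) μ' := by
  by_cases hsmall : #A ≤ finrank 𝕜 E
  · obtain ⟨i, hi⟩ := hA
    refine ⟨i, hi, 0, ⟨by simp, fun _ => by simp, ?_, by simp⟩⟩
    have : #(A.erase i) ≤ finrank 𝕜 E := (card_erase_le).trans hsmall
    simpa using (Nat.cast_le (α := 𝕜)).2 this
  obtain ⟨ν, hν, hνA, hνsum, hνv⟩ := h.exists_sum_eq (not_le.1 hsmall)
  -- at a vertex at most `d + 1` weights are fractional, and `∑ ν = #A - (d + 1)` then forces a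
  -- zero weight on `A`
  obtain ⟨μ', hμ', hsupp, hmom, hfrac⟩ :=
    exists_card_fractionalSupport_le (fun i => ((1 : 𝕜), v i)) ν hν
  have hsum : ∑ i, μ' i = ∑ i, ν i := by simpa [Prod.fst_sum] using congrArg Prod.fst hmom
  have hv : ∑ i, μ' i • v i = 0 := by simpa [Prod.snd_sum, hνv] using congrArg Prod.snd hmom
  rw [finrank_prod, finrank_self, add_comm] at hfrac
  obtain ⟨i, hi, hμ'i⟩ :=
    exists_mem_eq_zero_of_sum_le hμ' (hsupp.trans hνA) hfrac (hsum.trans hνsum).le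
  refine ⟨i, hi, μ', ⟨fun j hj => ?_, hμ', ?_, hv⟩⟩
  · exact mem_erase.2 ⟨fun hji => hj (hji ▸ hμ'i), hνA (hsupp hj)⟩
  · rw [hsum, hνsum, card_erase_of_mem hi, Nat.cast_sub (card_pos.2 ⟨i, hi⟩)]
    simp only [Nat.cast_one]
    linarith

lemma IsSteinitzWeight_s14.exists_chain [DecidableEq ι] (h : IsSteinitzWeight_s14 v A μ) :
    ∃ B : ℕ → Finset ι, Monotone B ∧ B #A = A ∧ (∀ k ≤ #A, #(B k) = k) ∧
      ∀ k, ∃ μ' : ι → 𝕜, IsSteinitzWeight_s14 v (B k) μ' := by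
  induction hn : #A generalizing A μ with
  | zero =>
    exact ⟨fun _ => A, monotone_const, rfl, fun k hk => hn.trans (Nat.le_zero.1 hk).symm,
      fun _ => ⟨μ, h⟩⟩
  | succ m ih =>
    obtain ⟨i, hi, μ', h'⟩ := h.exists_erase (card_pos.1 (by omega))
    obtain ⟨B, hB, hBm, hBcard, hBw⟩ := ih h' (by rw [card_erase_of_mem hi, hn]; rfl)
    have hBA : ∀ k ≤ m, B k ⊆ A := fun k hk => (hB hk).trans (hBm ▸ erase_subset i A)
    refine ⟨fun k => if k ≤ m then B k else A, monotone_nat_of_le_succ fun k => ?_,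
      by simp, fun k hk => ?_, fun k => ?_⟩
    · by_cases hk : k + 1 ≤ m
      · simp only [hk, (Nat.le_succ k).trans hk, if_true]
        exact hB (Nat.le_succ k)
      · simp only [hk, if_false]
        split_ifs with hk'
        exacts [hBA k hk', subset_rfl]
    · dsimp only
      split_ifs with hk'
      exacts [hBcard k hk', by omega]
    · dsimp only
      split_ifs
      exacts [hBw k, ⟨μ, h⟩]

theorem exists_chain_isSteinitzWeight [DecidableEq ι] (hv : ∑ i, v i = 0) :
    ∃ B : ℕ → Finset ι, Monotone B ∧ (∀ k ≤ Fintype.card ι, #(B k) = k) ∧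
      ∀ k, ∃ μ : ι → 𝕜, IsSteinitzWeight_s14 v (B k) μ := by
  set n := Fintype.card ι
  suffices ∃ μ : ι → 𝕜, IsSteinitzWeight_s14 v univ μ by
    obtain ⟨μ, h⟩ := this
    obtain ⟨B, hB, -, hBcard, hBw⟩ := h.exists_chain
    exact ⟨B, hB, by simpa using hBcard, hBw⟩
  by_cases hsmall : n ≤ finrank 𝕜 E
  · refine ⟨0, by simp, fun _ => by simp, ?_, by simp⟩
    simpa [n] using (Nat.cast_le (α := 𝕜)).2 hsmall
  have hn : (0 : 𝕜) < n := by exact_mod_cast (Nat.zero_le _).trans_lt (not_le.1 hsmall)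
  have hdn : (finrank 𝕜 E : 𝕜) ≤ n := by exact_mod_cast (not_le.1 hsmall).le
  refine ⟨fun _ => (n - finrank 𝕜 E) / n, by simp, fun _ => ⟨?_, ?_⟩, ?_, ?_⟩
  · exact div_nonneg (sub_nonneg.2 hdn) hn.le
  · exact (div_le_one hn).2 (by simp)
  · simp [n, mul_div_cancel₀ _ hn.ne']
  · simp [← smul_sum, hv]

end Steinitz

theorem exists_chain_abs_sum_le {ι : Type*} [Fintype ι] [DecidableEq ι] {d : ℕ}
    (w : ι → Fin d → ℤ) (Δ : ℕ) (hw : ∀ i r, |w i r| ≤ Δ) (hsum : ∑ i, w i = 0) :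
    ∃ B : ℕ → Finset ι, Monotone B ∧ (∀ k ≤ Fintype.card ι, #(B k) = k) ∧
      ∀ k r, |∑ i ∈ B k, w i r| ≤ d * Δ := by
  have hsumℚ : ∑ i, (fun r => (w i r : ℚ)) = 0 := by
    ext r
    simpa using congrArg (fun x => (x r : ℚ)) hsum
  obtain ⟨B, hB, hBcard, hBw⟩ := exists_chain_isSteinitzWeight (𝕜 := ℚ) hsumℚ
  refine ⟨B, hB, hBcard, fun k r => ?_⟩
  obtain ⟨μ, hμ⟩ := hBw k
  have := hμ.abs_sum_map_le (LinearMap.proj r) (Nat.cast_nonneg Δ) fun i _ => by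
    simpa using (Int.cast_le (R := ℚ)).2 (hw i r)
  rw [finrank_fin_fun] at this
  simp only [LinearMap.proj_apply] at this
  exact_mod_cast this

lemma card_piFinset_Icc_neg (d M : ℕ) :
    #(Fintype.piFinset fun _ : Fin d => Icc (-(M : ℤ)) M) = (2 * M + 1) ^ d := by
  rw [Fintype.card_piFinset, prod_const, card_univ, Fintype.card_fin, Int.card_Icc,
    show (M + 1 - -M : ℤ) = (2 * M + 1 : ℕ) by push_cast; ring, Int.toNat_natCast]

lemma card_le_card_of_monotone_chain {ι V : Type*} [Fintype ι] [DecidableEq ι] [AddCommGroup V]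
    (w : ι → V) (hw : ∀ T : Finset ι, T.Nonempty → ∑ i ∈ T, w i = 0 → T = univ)
    {B : ℕ → Finset ι} (hB : Monotone B) (hcard : ∀ k ≤ Fintype.card ι, #(B k) = k)
    {S : Finset V} (hS : ∀ k < Fintype.card ι, ∑ i ∈ B k, w i ∈ S) :
    Fintype.card ι ≤ #S := by
  have key : ∀ a b, a ≤ b → b < Fintype.card ι → ∑ i ∈ B a, w i = ∑ i ∈ B b, w i → a = b := by
    intro a b hab hb heq
    by_contra hne
    have hsub := hB hab
    have hT : ∑ i ∈ B b \ B a, w i = 0 := by rw [sum_sdiff_eq_sub hsub, heq, sub_self]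
    have hTcard : #(B b \ B a) = b - a := by
      rw [card_sdiff_of_subset hsub, hcard b hb.le, hcard a (by omega)]
    have := congrArg card (hw _ (card_pos.1 (by omega)) hT)
    rw [hTcard, card_univ] at this
    omega
  calc Fintype.card ι = #(range (Fintype.card ι)) := (card_range _).symm
    _ ≤ #S := card_le_card_of_injOn (fun k => ∑ i ∈ B k, w i)
        (fun k hk => hS k (mem_range.1 hk)) fun a ha b hb heq =>
          (le_total a b).elim (fun h => key a b h (mem_range.1 hb) heq)
            fun h => (key b a h (mem_range.1 ha) heq.symm).symm

section Conformal

open scoped Matrix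

variable {κ : Type*} (g : κ → ℤ)

-- `Σ i, Fin |gᵢ|` indexes the `‖g‖₁` signed unit vectors `sign (gᵢ) • eᵢ` summing to `g`;
-- `conformalPart g T` is the sum of those indexed by `T`
noncomputable def conformalPart (T : Finset (Σ i, Fin (g i).natAbs)) (i : κ) : ℤ :=
  (g i).sign * #(T.preimage (Sigma.mk i) sigma_mk_injective.injOn)

def signedColumn {d : ℕ} (D : Matrix (Fin d) κ ℤ) (p : Σ i, Fin (g i).natAbs) : Fin d → ℤ :=
  (g p.1).sign • Dᵀ p.1

lemma abs_signedColumn_le {d : ℕ} {D : Matrix (Fin d) κ ℤ} {Δ : ℤ} (hD : ∀ r i, |D r i| ≤ Δ)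
    (p : Σ i, Fin (g i).natAbs) (r : Fin d) : |signedColumn g D p r| ≤ Δ := by
  by_cases hg : g p.1 = 0
  · simpa [signedColumn, hg] using (abs_nonneg _).trans (hD r p.1)
  · simpa [signedColumn, abs_mul, Int.abs_sign_of_ne_zero hg] using hD r p.1

variable {g} (T : Finset (Σ i, Fin (g i).natAbs))

lemma abs_conformalPart (i : κ) :
    |conformalPart g T i| = #(T.preimage (Sigma.mk i) sigma_mk_injective.injOn) := by
  by_cases hgi : g i = 0
  · have : #(T.preimage (Sigma.mk i) sigma_mk_injective.injOn) = 0 :=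
      Nat.le_zero.1 ((card_le_univ _).trans_eq (by simp [hgi]))
    simp [conformalPart, this]
  · simp [conformalPart, abs_mul, Int.abs_sign_of_ne_zero hgi]

lemma conformalPart_mul_nonneg_and_abs_le (i : κ) :
    0 ≤ conformalPart g T i * g i ∧ |conformalPart g T i| ≤ |g i| := by
  constructor
  · rw [conformalPart, mul_right_comm, Int.sign_mul_self_eq_abs]
    positivity
  · rw [abs_conformalPart, Int.abs_eq_natAbs]
    exact_mod_cast (card_le_univ _).trans_eq (Fintype.card_fin _)

variable [Fintype κ]

lemma sum_abs_conformalPart [DecidableEq κ] : ∑ i, |conformalPart g T i| = #T := by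
  simp only [abs_conformalPart]
  rw [← Nat.cast_sum, ← card_sigma, sigma_preimage_mk_of_subset T (subset_univ _)]

lemma conformalPart_univ : conformalPart g univ = g := by
  ext i
  simp [conformalPart, Int.sign_mul_abs]

lemma mulVec_conformalPart [DecidableEq κ] {d : ℕ} (D : Matrix (Fin d) κ ℤ) :
    D *ᵥ conformalPart g T = ∑ p ∈ T, signedColumn g D p := by
  conv_rhs => rw [← sigma_preimage_mk_of_subset T (subset_univ _), sum_sigma]
  rw [Matrix.mulVec_eq_sum]
  refine sum_congr rfl fun i _ => ?_
  simp only [signedColumn, sum_const, op_smul_eq_smul, conformalPart]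
  rw [mul_comm, mul_smul, Nat.cast_smul_eq_nsmul]

end Conformal

namespace Graver

open scoped Matrix

variable {d t : ℕ} {D : Matrix (Fin d) (Fin t) ℤ} {g : Fin t → ℤ}

lemma sum_signedColumn_eq_zero (hg : g ∈ Graver D) :
    ∑ p, signedColumn g D p = 0 := by
  rw [← mulVec_conformalPart, conformalPart_univ]
  exact hg.2.1

lemma eq_univ_of_sum_signedColumn_eq_zero (hg : g ∈ Graver D)
    {T : Finset (Σ i, Fin (g i).natAbs)} (hT : T.Nonempty)
    (hsum : ∑ p ∈ T, signedColumn g D p = 0) : T = univ := by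
  have hnorm := sum_abs_conformalPart T
  have hne : conformalPart g T ≠ 0 := fun h0 => by
    simp only [h0, Pi.zero_apply, abs_zero, sum_const_zero] at hnorm
    exact hT.card_ne_zero (by exact_mod_cast hnorm.symm)
  have heq : conformalPart g T = g :=
    hg.2.2 _ hne (by rw [mulVec_conformalPart, hsum]) (conformalPart_mul_nonneg_and_abs_le T)
  refine eq_univ_of_card T ?_
  rw [heq] at hnorm
  rw [Fintype.card_sigma]
  zify
  simpa [Int.natCast_natAbs] using hnorm.symm

end Graver

/-- There is a universal constant `c > 0` such that for all `d, t ≥ 1` and `Δ ≥ 1`,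
every Graver basis element `g` of a matrix `D ∈ ℤ^{d×t}` with entries of absolute
value at most `Δ` satisfies `‖g‖₁ ≤ (c·d·Δ)ᵈ`. -/
theorem graver_basis_norm_bound :
    ∃ c : ℕ, 0 < c ∧ ∀ d t Δ : ℕ, 1 ≤ d → 1 ≤ t → 1 ≤ Δ →
      ∀ D : Matrix (Fin d) (Fin t) ℤ, (∀ i j, |D i j| ≤ (Δ : ℤ)) →
        ∀ g ∈ Graver D, ∑ i, |g i| ≤ ((c * d * Δ : ℕ) : ℤ) ^ d := by
  refine ⟨3, by norm_num, fun d t Δ hd _ hΔ D hD g hg => ?_⟩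
  obtain ⟨B, hB, hBcard, hBsum⟩ := exists_chain_abs_sum_le _ Δ
    (abs_signedColumn_le g hD) (Graver.sum_signedColumn_eq_zero hg)
  have hcard := card_le_card_of_monotone_chain _
    (fun T hT hsum => Graver.eq_univ_of_sum_signedColumn_eq_zero hg hT hsum) hB hBcard
    (S := Fintype.piFinset fun _ : Fin d => Icc (-((d * Δ : ℕ) : ℤ)) (d * Δ : ℕ))
    fun k _ => Fintype.mem_piFinset.2 fun r => mem_Icc.2 (abs_le.1 (by simpa using hBsum k r))
  rw [Fintype.card_sigma, card_piFinset_Icc_neg] at hcard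
  calc ∑ i, |g i| = ((∑ i, Fintype.card (Fin (g i).natAbs) : ℕ) : ℤ) := by simp
    _ ≤ ((2 * (d * Δ) + 1) ^ d : ℕ) := Nat.cast_le.2 hcard
    _ ≤ ((3 * d * Δ : ℕ) : ℤ) ^ d := by
        push_cast
        gcongr
        nlinarith
end

section
/- Let d, t ≥ 1 be integers, let D ∈ ℝ^{d×t}, let p ∈ ℝ^d, and let P = {x ∈ ℝ^t : x ≥ 0 componentwise and Dx = p}. Then for every x ∈ P there exists an extreme point u of P such that (t+1)·x ≥ u componentwise. -/
/-!
The points `y ≥ 0` of `P` vanishing wherever `x` does form a face `F` of `P`, and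
`f y = ∑ i, y i / x i` is a linear functional with `y ≤ f y • x` on `F` and `f x ≤ t`.
Cutting `F` by `f ≤ t + 1` gives a compact convex set; by Krein–Milman, `f` attains its minimum
over it at an extreme point `u`. Since `f u ≤ f x < t + 1`, the cut is inactive near `u`, so `u`
is an extreme point of `F`, hence of `P`, and `u ≤ f u • x ≤ t • x`.
-/

open Set Topology AffineMap

section ExtremePoints

variable {E : Type*} [AddCommGroup E] [Module ℝ E] [TopologicalSpace E]
  [IsTopologicalAddGroup E] [ContinuousSMul ℝ E]

theorem mem_extremePoints_of_mem_extremePoints_inter_of_mem_nhds {C K : Set E} {w : E}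
    (hC : Convex ℝ C) (hK : K ∈ 𝓝 w) (hw : w ∈ (C ∩ K).extremePoints ℝ) :
    w ∈ C.extremePoints ℝ := by
  refine ⟨hw.1.1, fun a ha b hb hab => ?_⟩
  -- shrink the segment `[a, b]` towards `w` by a factor `ε` small enough that it lies in `K`
  have near : ∀ z : E, ∀ᶠ ε in 𝓝[>] (0 : ℝ), lineMap w z ε ∈ K := fun z =>
    lineMap_continuous.continuousWithinAt.eventually_mem (by simpa using hK)
  obtain ⟨ε, haK, hbK, hε⟩ := ((near a).and ((near b).and (Ioo_mem_nhdsGT one_pos))).exists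
  have hseg : w ∈ openSegment ℝ (lineMap w a ε) (lineMap w b ε) := by
    simpa only [image_openSegment, homothety_apply_same, homothety_eq_lineMap] using
      mem_image_of_mem (homothety w ε) hab
  have hshrink := hw.2 ⟨hC.lineMap_mem hw.1.1 ha (Ioo_subset_Icc_self hε), haK⟩
    ⟨hC.lineMap_mem hw.1.1 hb (Ioo_subset_Icc_self hε), hbK⟩ hseg
  exact ((lineMap_eq_left_iff.1 hshrink).resolve_right hε.1.ne').symm

variable [T2Space E] [LocallyConvexSpace ℝ E]

theorem IsCompact.exists_mem_extremePoints_le {s : Set E} (hs : IsCompact s) (l : StrongDual ℝ E)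
    {x : E} (hx : x ∈ s) : ∃ w ∈ s.extremePoints ℝ, l w ≤ l x := by
  obtain ⟨z, hzs, hz⟩ := hs.exists_isMinOn ⟨x, hx⟩ l.continuous.continuousOn
  have hexp : IsExposed ℝ s ((-l).toExposed s) := ContinuousLinearMap.toExposed.isExposed
  obtain ⟨w, hw⟩ := (hexp.isCompact hs).extremePoints_nonempty
    ⟨z, hzs, fun y hy => by simpa using hz hy⟩
  exact ⟨w, hexp.isExtreme.extremePoints_subset_extremePoints hw,
    (by simpa using hw.1.2 z hzs : l w ≤ l z).trans (hz hx)⟩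

end ExtremePoints

section Orthant

variable {ι : Type*}

theorem isExtreme_setOf_forall_eq_zero {A : Set (ι → ℝ)} (hA : ∀ y ∈ A, 0 ≤ y) (S : Set ι) :
    IsExtreme ℝ A {y ∈ A | ∀ i ∈ S, y i = 0} := by
  refine ⟨sep_subset _ _, fun a ha b hb y ⟨_, hy⟩ ⟨θ, μ, hθ, hμ, _, hab⟩ => ⟨ha, fun i hi => ?_⟩⟩
  have hsum : θ * a i + μ * b i = 0 := by simpa [← hab] using hy i hi
  have hθa := ((add_eq_zero_iff_of_nonneg (mul_nonneg hθ.le (hA a ha i))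
    (mul_nonneg hμ.le (hA b hb i))).1 hsum).1
  exact (mul_eq_zero.1 hθa).resolve_left hθ.ne'

variable [Fintype ι]

/-- Only the support of `x` contributes, since `y i / 0 = 0`. -/
noncomputable def sumDiv (x : ι → ℝ) : StrongDual ℝ (ι → ℝ) :=
  ∑ i, (x i)⁻¹ • ContinuousLinearMap.proj i

theorem sumDiv_apply (x y : ι → ℝ) : sumDiv x y = ∑ i, y i / x i := by
  simp [sumDiv, div_eq_inv_mul]

theorem sumDiv_self_le_card (x : ι → ℝ) : sumDiv x x ≤ Fintype.card ι := by
  calc sumDiv x x = ∑ i, x i / x i := sumDiv_apply x x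
    _ ≤ ∑ _i : ι, (1 : ℝ) := Finset.sum_le_sum fun i _ => div_self_le_one (x i)
    _ = Fintype.card ι := by simp

theorem le_sumDiv_mul {x y : ι → ℝ} (hx : 0 ≤ x) (hy : 0 ≤ y) (hyx : ∀ i, x i = 0 → y i = 0)
    (i : ι) : y i ≤ sumDiv x y * x i := by
  rcases (hx i).eq_or_lt with hxi | hxi
  · simp [hyx i hxi.symm, ← hxi]
  calc y i = y i / x i * x i := (div_mul_cancel₀ _ hxi.ne').symm
    _ ≤ sumDiv x y * x i := by
      rw [sumDiv_apply]
      exact mul_le_mul_of_nonneg_right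
        (Finset.single_le_sum (fun j _ => div_nonneg (hy j) (hx j)) (Finset.mem_univ i)) (hx i)

theorem exists_mem_extremePoints_le_card_smul {A : Set (ι → ℝ)} (hAc : IsClosed A)
    (hAconv : Convex ℝ A) (hA : ∀ y ∈ A, 0 ≤ y) {x : ι → ℝ} (hx : x ∈ A) :
    ∃ u ∈ A.extremePoints ℝ, u ≤ (Fintype.card ι : ℝ) • x := by
  set F := {y ∈ A | ∀ i ∈ {i | x i = 0}, y i = 0}
  set Q := F ∩ {y | sumDiv x y ≤ Fintype.card ι + 1}
  have hF : ∀ y ∈ F, ∀ i, y i ≤ sumDiv x y * x i := fun y hy =>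
    le_sumDiv_mul (hA x hx) (hA y hy.1) hy.2
  have hFconv : Convex ℝ F := fun a ha b hb θ μ hθ hμ hθμ =>
    ⟨hAconv ha.1 hb.1 hθ hμ hθμ, fun i hi => by simp [ha.2 i hi, hb.2 i hi]⟩
  have hQc : IsClosed Q := by
    refine (hAc.inter ?_).inter (isClosed_le (sumDiv x).continuous continuous_const)
    show IsClosed {y : ι → ℝ | ∀ i ∈ {i | x i = 0}, y i = 0}
    simp only [Set.ofPred_forall]
    exact isClosed_biInter fun i _ => isClosed_eq (continuous_apply i) continuous_const
  have hQ : IsCompact Q := (isCompact_univ_pi fun i => isCompact_Icc).of_isClosed_subset hQc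
    fun y hy => mem_univ_pi.2 fun i =>
      ⟨hA y hy.1.1 i, (hF y hy.1 i).trans (mul_le_mul_of_nonneg_right hy.2 (hA x hx i))⟩
  have hxQ : x ∈ Q :=
    ⟨⟨hx, fun i hi => hi⟩, (sumDiv_self_le_card x).trans (le_add_of_nonneg_right zero_le_one)⟩
  obtain ⟨u, huQ, hux⟩ := hQ.exists_mem_extremePoints_le (sumDiv x) hxQ
  have hu_card : sumDiv x u ≤ Fintype.card ι := hux.trans (sumDiv_self_le_card x)
  have hnhds : {y | sumDiv x y ≤ Fintype.card ι + 1} ∈ 𝓝 u :=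
    (sumDiv x).continuous.tendsto u |>.eventually <| eventually_le_nhds <| by linarith
  refine ⟨u, (isExtreme_setOf_forall_eq_zero hA _).extremePoints_subset_extremePoints
    (mem_extremePoints_of_mem_extremePoints_inter_of_mem_nhds hFconv hnhds huQ), fun i => ?_⟩
  exact (hF u huQ.1.1 i).trans (mul_le_mul_of_nonneg_right hu_card (hA x hx i))

end Orthant

theorem convex_setOf_nonneg_mulVec_eq {m n : Type*} [Fintype n] (D : Matrix m n ℝ) (p : m → ℝ) :
    Convex ℝ {x : n → ℝ | (∀ i, 0 ≤ x i) ∧ D.mulVec x = p} :=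
  (convex_Ici (0 : n → ℝ)).inter ((convex_singleton p).linear_preimage D.mulVecLin)

theorem isClosed_setOf_nonneg_mulVec_eq {m n : Type*} [Fintype n] (D : Matrix m n ℝ)
    (p : m → ℝ) : IsClosed {x : n → ℝ | (∀ i, 0 ≤ x i) ∧ D.mulVec x = p} :=
  (isClosed_Ici (a := (0 : n → ℝ))).inter
    (isClosed_eq (continuous_const.matrix_mulVec continuous_id) continuous_const)

theorem scaled_point_dominates_vertex_general
    (d t : ℕ)
    (D : Matrix (Fin d) (Fin t) ℝ) (p : Fin d → ℝ)
    (P : Set (Fin t → ℝ))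
    (hP : P = {x : Fin t → ℝ | (∀ i, 0 ≤ x i) ∧ D.mulVec x = p}) :
    ∀ x ∈ P, ∃ u ∈ P.extremePoints ℝ, ∀ i, u i ≤ ((t : ℝ) + 1) * x i := by
  subst hP
  intro x hx
  obtain ⟨u, hu, hux⟩ := exists_mem_extremePoints_le_card_smul
    (isClosed_setOf_nonneg_mulVec_eq D p) (convex_setOf_nonneg_mulVec_eq D p)
    (fun y hy => hy.1) hx
  refine ⟨u, hu, fun i => (hux i).trans ?_⟩
  simpa using mul_le_mul_of_nonneg_right (le_add_of_nonneg_right zero_le_one) (hx.1 i)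

/-- For `D ∈ ℝ^{d×t}` and `p ∈ ℝᵈ`, let `P = {x ≥ 0 : D x = p}`.  Every `x ∈ P`
dominates, after scaling by `t + 1`, some extreme point `u` of `P`:
`(t+1)·x ≥ u` componentwise. -/
theorem scaled_point_dominates_vertex
    (d t : ℕ) (hd : 1 ≤ d) (ht : 1 ≤ t)
    (D : Matrix (Fin d) (Fin t) ℝ) (p : Fin d → ℝ)
    (P : Set (Fin t → ℝ))
    (hP : P = {x : Fin t → ℝ | (∀ i, 0 ≤ x i) ∧ D.mulVec x = p}) :
    ∀ x ∈ P, ∃ u ∈ P.extremePoints ℝ, ∀ i, u i ≤ ((t : ℝ) + 1) * x i :=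
  scaled_point_dominates_vertex_general d t D p P hP
end
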